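/- arXiv:1802.01242 — 5 statements merged into one kernel-verified Lean document; each statement's English description precedes it below -/
import Mathlib

section
/- There is an absolute constant C > 0 with the following property. Let G = (V,E) be a finite undirected graph with n = |V| ≥ 2 vertices, let c : E → ℝ≥0 be edge costs, let ε ∈ (0,1), and let x : E → ℝ be feasible for the 2ECSS LP on G. Then there exists a vector y : E → ℝ that is feasible for the 2ECSS LP on G such that the support of y is contained in the support of x, the support of y has at most C · n · (log n) / ε² edges, and Σ_{e∈E} c_e y_e ≤ (1+ε) · Σ_{e∈E} c_e x_e. -/
open scoped Classical

noncomputable section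

variable {V : Type*} [Fintype V] [DecidableEq V]

/-- Cut value of `S`: the sum of `x` over edges of `G` with exactly one endpoint in `S`. -/
def cutSum (G : SimpleGraph V) (x : Sym2 V → ℝ) (S : Set V) : ℝ :=
  ∑ e : Sym2 V, if e ∈ G.edgeSet ∧ ∃ u v, e = s(u, v) ∧ u ∈ S ∧ v ∉ S then x e else 0

/-- `x` is feasible for the 2ECSS LP on `G`: nonnegative on edges, and every
nonempty proper cut has value at least `2`. -/
def Feas2ECSS (G : SimpleGraph V) (x : Sym2 V → ℝ) : Prop :=
  (∀ e ∈ G.edgeSet, 0 ≤ x e) ∧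
    ∀ S : Set V, S.Nonempty → S ≠ Set.univ → 2 ≤ cutSum G x S

/-- Cost `∑_{e ∈ E} c_e x_e` of a vector `x` with respect to edge costs `c`. -/
def lpCost (G : SimpleGraph V) (c x : Sym2 V → ℝ) : ℝ :=
  ∑ e : Sym2 V, if e ∈ G.edgeSet then c e * x e else 0

/-- The support of `x`: edges of `G` where `x` is nonzero. -/
def lpSupport (G : SimpleGraph V) (x : Sym2 V → ℝ) : Finset (Sym2 V) :=
  Finset.univ.filter fun e => e ∈ G.edgeSet ∧ x e ≠ 0

/-!
The sparse solution is a vertex of the 2ECSS polytope cut down to the support of `x` and to cost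
at most that of `x`. Starting at `x`, move inside this polytope until the tight constraints span the
whole space. By uncrossing, the tight cut constraints at the resulting vertex `y` are spanned,
modulo the coordinates where `y` vanishes, by the cuts of a laminar family of subsets of
`V ∖ {v₀}`, which has at most `2n - 3` members (Jain's counting argument). Counting dimensions, `y`
has fewer than `2n` nonzero coordinates, and `2n ≤ 4 n log n / ε²`; the cost bound holds even
for `ε = 0`.
-/

namespace Finset

lemma card_filter_lt_card_filter {β : Type*} {s : Finset β} {p q : β → Prop} [DecidablePred p]
    [DecidablePred q] (hqp : ∀ b ∈ s, q b → p b) {b : β} (hb : b ∈ s) (hpb : p b) (hqb : ¬q b) :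
    #(s.filter q) < #(s.filter p) :=
  card_lt_card ⟨monotone_filter_right s hqp,
    fun h => hqb (mem_filter.1 (h (mem_filter.2 ⟨hb, hpb⟩))).2⟩

variable {α : Type*}

def Crosses (S R : Finset α) : Prop := ¬S ⊆ R ∧ ¬R ⊆ S ∧ ¬Disjoint S R

def IsLaminar (L : Finset (Finset α)) : Prop :=
  ∀ S ∈ L, ∀ R ∈ L, S ⊆ R ∨ R ⊆ S ∨ Disjoint S R

lemma IsLaminar.mono {L L' : Finset (Finset α)} (h : L' ⊆ L) (hL : IsLaminar L) :
    IsLaminar L' :=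
  fun S hS R hR => hL S (h hS) R (h hR)

lemma IsLaminar.subset_or_disjoint_of_card_le {L : Finset (Finset α)} (hL : IsLaminar L)
    {S S₀ : Finset α} (hS : S ∈ L) (hS₀ : S₀ ∈ L) (hcard : #S ≤ #S₀) :
    S ⊆ S₀ ∨ Disjoint S S₀ := by
  rcases hL S hS S₀ hS₀ with h | h | h
  · exact .inl h
  · exact .inl (eq_of_subset_of_card_le h hcard ▸ subset_rfl)
  · exact .inr h

variable [DecidableEq α]

lemma isLaminar_insert {L : Finset (Finset α)} {S : Finset α} (hL : IsLaminar L)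
    (hS : ∀ R ∈ L, ¬Crosses S R) : IsLaminar (insert S L) := by
  have hS' : ∀ R ∈ L, S ⊆ R ∨ R ⊆ S ∨ Disjoint S R := fun R hR => by
    have := hS R hR
    unfold Crosses at this
    tauto
  intro A hA B hB
  rcases mem_insert.1 hA with rfl | hAL <;> rcases mem_insert.1 hB with rfl | hBL
  · exact Or.inl subset_rfl
  · exact hS' B hBL
  · rcases hS' A hAL with h | h | h
    · exact Or.inr (Or.inl h)
    · exact Or.inl h
    · exact Or.inr (Or.inr h.symm)
  · exact hL A hAL B hBL

lemma Crosses.of_inter_left {S R Q : Finset α} (hQR : Q ⊆ R ∨ R ⊆ Q ∨ Disjoint Q R)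
    (h : Crosses (S ∩ R) Q) : Crosses S Q := by
  obtain ⟨h₁, h₂, h₃⟩ := h
  rcases hQR with hQR | hQR | hQR
  · refine ⟨fun hSQ => h₁ (inter_subset_left.trans hSQ), fun hQS => h₂ (subset_inter hQS hQR),
      fun hd => h₃ (hd.mono_left inter_subset_left)⟩
  · exact absurd (inter_subset_right.trans hQR) h₁
  · exact absurd (hQR.symm.mono_left inter_subset_right) h₃

lemma Crosses.of_union_left {S R Q : Finset α} (hSR : ¬Disjoint S R)
    (hQR : Q ⊆ R ∨ R ⊆ Q ∨ Disjoint Q R) (h : Crosses (S ∪ R) Q) : Crosses S Q := by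
  obtain ⟨h₁, h₂, h₃⟩ := h
  rcases hQR with hQR | hQR | hQR
  · exact absurd (hQR.trans subset_union_right) h₂
  · refine ⟨fun hSQ => h₁ (union_subset hSQ hQR), fun hQS => h₂ (hQS.trans subset_union_left),
      fun hd => hSR (hd.mono_right hQR)⟩
  · refine ⟨fun hSQ => hSR (hQR.mono_left hSQ), fun hQS => h₂ (hQS.trans subset_union_left),
      fun hd => h₃ (disjoint_union_left.2 ⟨hd, hQR.symm⟩)⟩

lemma exists_maximal_isLaminar_subset (T : Finset (Finset α)) :
    ∃ L ⊆ T, IsLaminar L ∧ ∀ S ∈ T, S ∉ L → ∃ R ∈ L, Crosses S R := by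
  obtain ⟨L, hL, hmax⟩ := exists_max_image (T.powerset.filter (IsLaminar (α := α))) card
    ⟨∅, mem_filter.2 ⟨empty_mem_powerset T, by simp [IsLaminar]⟩⟩
  obtain ⟨hLT, hLlam⟩ := mem_filter.1 hL
  refine ⟨L, mem_powerset.1 hLT, hLlam, fun S hST hSL => ?_⟩
  by_contra! hS
  have := hmax (insert S L) (mem_filter.2 ⟨mem_powerset.2 (insert_subset hST (mem_powerset.1 hLT)),
    isLaminar_insert hLlam hS⟩)
  rw [card_insert_of_notMem hSL] at this
  omega

theorem IsLaminar.card_le {L : Finset (Finset α)} {X : Finset α} (hL : IsLaminar L)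
    (hLX : ∀ S ∈ L, S.Nonempty ∧ S ⊆ X) : #L ≤ 2 * #X - 1 := by
  induction X using strongInduction generalizing L with
  | H X ih =>
  rcases (L.erase X).eq_empty_or_nonempty with hX | hne
  · rcases (erase_eq_empty_iff L X).1 hX with rfl | rfl
    · simp
    · have := card_pos.2 (hLX X (mem_singleton_self X)).1
      rw [card_singleton]
      omega
  -- split `L ∖ {X}` at a largest member `S₀`: the rest lies inside `S₀` or inside `X ∖ S₀`
  obtain ⟨S₀, hS₀, hmax⟩ := exists_max_image _ card hne
  obtain ⟨hS₀X, hS₀L⟩ := mem_erase.1 hS₀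
  obtain ⟨hS₀ne, hS₀sub⟩ := hLX S₀ hS₀L
  have hS₀ssub : S₀ ⊂ X := ssubset_iff_subset_ne.2 ⟨hS₀sub, hS₀X⟩
  have hcover : L ⊆ insert X (L.filter (· ⊆ S₀) ∪ L.filter (Disjoint · S₀)) := fun S hS => by
    rcases eq_or_ne S X with rfl | hSX
    · exact mem_insert_self _ _
    rcases hL.subset_or_disjoint_of_card_le hS hS₀L (hmax S (mem_erase.2 ⟨hSX, hS⟩)) with h | h
    · exact mem_insert_of_mem (mem_union_left _ (mem_filter.2 ⟨hS, h⟩))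
    · exact mem_insert_of_mem (mem_union_right _ (mem_filter.2 ⟨hS, h⟩))
  have hin := ih S₀ hS₀ssub (hL.mono (filter_subset _ L))
    fun S hS => ⟨(hLX S (mem_filter.1 hS).1).1, (mem_filter.1 hS).2⟩
  have hout := ih (X \ S₀) (sdiff_ssubset hS₀sub hS₀ne) (hL.mono (filter_subset _ L))
    fun S hS => ⟨(hLX S (mem_filter.1 hS).1).1,
      subset_sdiff.2 ⟨(hLX S (mem_filter.1 hS).1).2, (mem_filter.1 hS).2⟩⟩
  have h₁ := (card_le_card hcover).trans (card_insert_le _ _)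
  have h₂ := card_union_le (L.filter (· ⊆ S₀)) (L.filter (Disjoint · S₀))
  have h₃ := card_sdiff_of_subset hS₀sub
  have h₄ := card_pos.2 hS₀ne
  have h₅ := card_lt_card hS₀ssub
  omega

theorem exists_laminar_span_of_uncrossing {R M : Type*} [Ring R] [AddCommGroup M] [Module R M]
    (T : Finset (Finset α)) (f : Finset α → M) (W : Submodule R M)
    (hT : ∀ S ∈ T, ∀ Q ∈ T, Crosses S Q →
      S ∩ Q ∈ T ∧ S ∪ Q ∈ T ∧ f S + f Q - f (S ∩ Q) - f (S ∪ Q) ∈ W) :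
    ∃ L ⊆ T, IsLaminar L ∧ ∀ S ∈ T, f S ∈ W ⊔ Submodule.span R (f '' L) := by
  obtain ⟨L, hLT, hL, hmax⟩ := exists_maximal_isLaminar_subset T
  refine ⟨L, hLT, hL, fun S hS => ?_⟩
  induction hk : #(L.filter (Crosses S)) using Nat.strong_induction_on generalizing S with
  | _ k ih =>
  by_cases hSL : S ∈ L
  · exact Submodule.mem_sup_right (Submodule.subset_span ⟨S, hSL, rfl⟩)
  obtain ⟨Q, hQL, hSQ⟩ := hmax S hS hSL
  obtain ⟨hinter, hunion, hW⟩ := hT S hS Q (hLT hQL) hSQ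
  have hlt_inter : #(L.filter (Crosses (S ∩ Q))) < k := hk ▸ card_filter_lt_card_filter
    (fun P hP h => Crosses.of_inter_left (hL P hP Q hQL) h) hQL hSQ
    (fun h => h.1 inter_subset_right)
  have hlt_union : #(L.filter (Crosses (S ∪ Q))) < k := hk ▸ card_filter_lt_card_filter
    (fun P hP h => Crosses.of_union_left hSQ.2.2 (hL P hP Q hQL) h) hQL hSQ
    (fun h => h.2.1 subset_union_right)
  have hfQ : f Q ∈ W ⊔ Submodule.span R (f '' L) :=
    Submodule.mem_sup_right (Submodule.subset_span ⟨Q, hQL, rfl⟩)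
  have := Submodule.sub_mem _ (Submodule.add_mem _ (Submodule.add_mem _
    (Submodule.mem_sup_left hW) (ih _ hlt_inter _ hinter rfl))
    (ih _ hlt_union _ hunion rfl)) hfQ
  convert this using 1
  abel

end Finset

section Vertex

open Finset Submodule
open scoped RealInnerProductSpace

variable {E κ : Type*} [NormedAddCommGroup E] [InnerProductSpace ℝ E] (a : κ → E) (b : κ → ℝ)

def tightSet [Fintype κ] (y : E) : Finset κ := univ.filter fun i => ⟪a i, y⟫ = b i

@[simp] lemma mem_tightSet [Fintype κ] {y : E} {i : κ} : i ∈ tightSet a b y ↔ ⟪a i, y⟫ = b i := by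
  simp [tightSet]

lemma exists_inner_pos_of_span_ne_top [FiniteDimensional ℝ E] {s : Set κ}
    (hspan : span ℝ (Set.range a) = ⊤) (hs : span ℝ (a '' s) ≠ ⊤) :
    ∃ d : E, (∀ i ∈ s, ⟪a i, d⟫ = 0) ∧ ∃ i, 0 < ⟪a i, d⟫ := by
  obtain ⟨d, hd, hd0⟩ := exists_mem_ne_zero_of_ne_bot
    (mt orthogonal_eq_bot_iff.1 hs : (span ℝ (a '' s))ᗮ ≠ ⊥)
  have hds : ∀ i ∈ s, ⟪a i, d⟫ = 0 := fun i hi => (mem_orthogonal _ d).1 hd _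
    (subset_span ⟨i, hi, rfl⟩)
  obtain ⟨i₀, hi₀⟩ : ∃ i, ⟪a i, d⟫ ≠ 0 := by
    by_contra! h
    have : span ℝ (Set.range a) ⟂ span ℝ {d} :=
      isOrtho_span.2 fun _ ⟨i, hi⟩ _ hv => hi ▸ (Set.mem_singleton_iff.1 hv) ▸ h i
    rw [hspan, isOrtho_top_left, span_singleton_eq_bot] at this
    exact hd0 this
  refine ⟨⟪a i₀, d⟫ • d, fun i hi => by rw [inner_smul_right, hds i hi, mul_zero], i₀, ?_⟩
  rw [inner_smul_right]
  exact mul_self_pos.2 hi₀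

variable [Fintype κ]

lemma exists_tightSet_ssubset {y d : E} (hy : ∀ i, ⟪a i, y⟫ ≤ b i)
    (hd : ∀ i ∈ tightSet a b y, ⟪a i, d⟫ = 0) (hpos : ∃ i, 0 < ⟪a i, d⟫) :
    ∃ y', (∀ i, ⟪a i, y'⟫ ≤ b i) ∧ tightSet a b y ⊂ tightSet a b y' := by
  set P := univ.filter fun i => 0 < ⟪a i, d⟫
  have hP : P.Nonempty := by simpa [P, filter_nonempty_iff] using hpos
  -- step along `d` until the first constraint that `d` pushes against becomes tight
  obtain ⟨i₁, hi₁, hmin⟩ := P.exists_min_image (fun i => (b i - ⟪a i, y⟫) / ⟪a i, d⟫) hP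
  set t := (b i₁ - ⟪a i₁, y⟫) / ⟪a i₁, d⟫
  have hi₁pos : 0 < ⟪a i₁, d⟫ := (mem_filter.1 hi₁).2
  have ht : 0 ≤ t := div_nonneg (sub_nonneg.2 (hy i₁)) hi₁pos.le
  have hval : ∀ i, ⟪a i, y + t • d⟫ = ⟪a i, y⟫ + t * ⟪a i, d⟫ := fun i => by
    rw [inner_add_right, inner_smul_right]
  refine ⟨y + t • d, fun i => ?_, ⟨fun i hi => ?_, fun h => ?_⟩⟩
  · rw [hval]
    by_cases hi : 0 < ⟪a i, d⟫
    · have := hmin i (mem_filter.2 ⟨mem_univ i, hi⟩)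
      rw [le_div_iff₀ hi] at this
      linarith
    · nlinarith [hy i]
  · rw [mem_tightSet, hval, hd i hi, mul_zero, add_zero]
    exact (mem_tightSet a b).1 hi
  · have hi₁t : i₁ ∈ tightSet a b (y + t • d) := by
      rw [mem_tightSet, hval, div_mul_cancel₀ _ hi₁pos.ne']
      ring
    exact hi₁pos.ne' (hd i₁ (h hi₁t))

theorem exists_tightSet_span_eq_top [FiniteDimensional ℝ E] (hspan : span ℝ (Set.range a) = ⊤)
    {y₀ : E} (hy₀ : ∀ i, ⟪a i, y₀⟫ ≤ b i) :
    ∃ y, (∀ i, ⟪a i, y⟫ ≤ b i) ∧ span ℝ (a '' tightSet a b y) = ⊤ := by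
  -- a feasible point whose tight set has maximal size is a vertex
  obtain ⟨s, hs, hmax⟩ := exists_max_image
    (univ.filter fun s : Finset κ => ∃ y, (∀ i, ⟪a i, y⟫ ≤ b i) ∧ tightSet a b y = s)
    card ⟨_, mem_filter.2 ⟨mem_univ _, y₀, hy₀, rfl⟩⟩
  obtain ⟨y, hy, rfl⟩ := (mem_filter.1 hs).2
  refine ⟨y, hy, by_contra fun htop => ?_⟩
  obtain ⟨d, hd, hpos⟩ := exists_inner_pos_of_span_ne_top a hspan htop
  obtain ⟨y', hy', hlt⟩ := exists_tightSet_ssubset a b hy hd hpos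
  exact (card_lt_card hlt).not_ge
    (hmax _ (mem_filter.2 ⟨mem_univ _, y', hy', rfl⟩))

end Vertex

lemma Sym2.exists_mk_eq_mk_and_iff {α : Type*} {P : α → α → Prop} {u w : α} :
    (∃ a b, s(u, w) = s(a, b) ∧ P a b) ↔ P u w ∨ P w u := by
  constructor
  · rintro ⟨a, b, hab, h⟩
    rcases Sym2.eq_iff.1 hab with ⟨rfl, rfl⟩ | ⟨rfl, rfl⟩
    exacts [Or.inl h, Or.inr h]
  · rintro (h | h)
    exacts [⟨u, w, rfl, h⟩, ⟨w, u, Sym2.eq_swap, h⟩]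

namespace EuclideanSpace

open Finset
open scoped RealInnerProductSpace

lemma mem_span_single_of_inner_eq_zero {ι : Type*} [Fintype ι] [DecidableEq ι]
    {v y : EuclideanSpace ℝ ι} (hv : ∀ i, 0 ≤ v i) (hy : ∀ i, 0 ≤ y i) (h : ⟪v, y⟫ = 0) :
    v ∈ Submodule.span ℝ ((fun i => single i 1) '' {i | y i = 0}) := by
  have hterm := (Fintype.sum_eq_zero_iff_of_nonneg fun i => mul_nonneg (hy i) (hv i)).1
    (by simpa [PiLp.inner_apply] using h)
  have hbasis : (fun i => single i (1 : ℝ)) =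
      (basisFun ι ℝ).toBasis := by
    ext1 i
    simp
  rw [hbasis, Module.Basis.mem_span_image]
  intro i hi
  have hvi : v i ≠ 0 := by simpa using hi
  simpa [hvi] using congrFun hterm i

lemma card_filter_ne_zero_le_of_top_le_span {ι : Type*} [Fintype ι]
    [DecidableEq ι] {y : EuclideanSpace ℝ ι} {s : Finset (EuclideanSpace ℝ ι)}
    (h : ⊤ ≤ Submodule.span ℝ ((single · (1 : ℝ)) '' {i | y i = 0}) ⊔
      Submodule.span ℝ s) :
    #(univ.filter fun i => y i ≠ 0) ≤ #s := by
  set Z := univ.filter fun i => y i = 0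
  set gen := Z.image (single · (1 : ℝ)) ∪ s
  have hspan : Submodule.span ℝ (gen : Set (EuclideanSpace ℝ ι)) = ⊤ := by
    rw [coe_union, Submodule.span_union, coe_image, coe_filter_univ]
    exact top_le_iff.1 h
  have hgen : Module.finrank ℝ (Submodule.span ℝ (gen : Set (EuclideanSpace ℝ ι))) ≤ #gen :=
    finrank_span_finset_le_card gen
  rw [hspan, finrank_top, finrank_euclideanSpace] at hgen
  have hcard : #gen ≤ #Z + #s :=
    (card_union_le _ _).trans (Nat.add_le_add_right card_image_le #s)
  have hsplit : #Z + #{i | y i ≠ 0} = Fintype.card ι :=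
    card_filter_add_card_filter_not _
  omega

end EuclideanSpace

section Cuts

open Finset
open scoped RealInnerProductSpace

variable (G : SimpleGraph V)

def cutVec (S : Finset V) : EuclideanSpace ℝ (Sym2 V) :=
  WithLp.toLp 2 fun e => if e ∈ G.edgeSet ∧ ∃ u v, e = s(u, v) ∧ u ∈ S ∧ v ∉ S then 1 else 0

def crossVec (S R : Finset V) : EuclideanSpace ℝ (Sym2 V) :=
  WithLp.toLp 2 fun e => if e ∈ G.edgeSet ∧ ∃ u v, e = s(u, v) ∧ u ∈ S \ R ∧ v ∈ R \ S then 1 else 0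

lemma inner_cutVec (S : Finset V) (y : EuclideanSpace ℝ (Sym2 V)) :
    ⟪cutVec G S, y⟫ = cutSum G y S := by
  simp [cutVec, cutSum, PiLp.inner_apply]

lemma cutVec_compl (S : Finset V) : cutVec G Sᶜ = cutVec G S := by
  ext e
  induction e using Sym2.ind with
  | _ u w => simp only [cutVec, Sym2.exists_mk_eq_mk_and_iff, mem_compl, not_not]; grind

lemma cutVec_add_cutVec (S R : Finset V) :
    cutVec G S + cutVec G R = cutVec G (S ∩ R) + cutVec G (S ∪ R) + (2 : ℝ) • crossVec G S R := by
  ext e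
  induction e using Sym2.ind with
  | _ u w =>
    simp only [cutVec, crossVec, Sym2.exists_mk_eq_mk_and_iff, PiLp.add_apply, PiLp.smul_apply,
      smul_eq_mul, mem_inter, mem_union, mem_sdiff]
    by_cases he : s(u, w) ∈ G.edgeSet
    · by_cases u ∈ S <;> by_cases w ∈ S <;> by_cases u ∈ R <;> by_cases w ∈ R <;>
        simp [*] <;> norm_num
    · simp [he]

lemma crossVec_nonneg (S R : Finset V) (e : Sym2 V) : 0 ≤ crossVec G S R e := by
  simp only [crossVec, WithLp.ofLp_toLp]
  split_ifs <;> norm_num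

lemma uncross_tight {y : EuclideanSpace ℝ (Sym2 V)} (hy : ∀ e, 0 ≤ y e) {k : ℝ} {S R : Finset V}
    (hS : ⟪cutVec G S, y⟫ = k) (hR : ⟪cutVec G R, y⟫ = k)
    (hinter : k ≤ ⟪cutVec G (S ∩ R), y⟫) (hunion : k ≤ ⟪cutVec G (S ∪ R), y⟫) :
    ⟪cutVec G (S ∩ R), y⟫ = k ∧ ⟪cutVec G (S ∪ R), y⟫ = k ∧
      cutVec G S + cutVec G R - cutVec G (S ∩ R) - cutVec G (S ∪ R) ∈
        Submodule.span ℝ ((fun e => EuclideanSpace.single e 1) '' {e | y e = 0}) := by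
  have hsum := congrArg (⟪·, y⟫) (cutVec_add_cutVec G S R)
  simp only [inner_add_left, real_inner_smul_left, hS, hR] at hsum
  have hcross : 0 ≤ ⟪crossVec G S R, y⟫ := by
    simpa [PiLp.inner_apply] using Finset.sum_nonneg fun e _ => mul_nonneg (hy e)
      (crossVec_nonneg G S R e)
  have hcross0 : ⟪crossVec G S R, y⟫ = 0 := by linarith
  refine ⟨by linarith, by linarith, ?_⟩
  rw [show cutVec G S + cutVec G R - cutVec G (S ∩ R) - cutVec G (S ∪ R) =
    (2 : ℝ) • crossVec G S R by rw [cutVec_add_cutVec]; abel]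
  exact Submodule.smul_mem _ _ (EuclideanSpace.mem_span_single_of_inner_eq_zero
    (crossVec_nonneg G S R) hy hcross0)

theorem exists_laminar_span_tight_cutVec {y : EuclideanSpace ℝ (Sym2 V)} (hy : ∀ e, 0 ≤ y e)
    (hcut : ∀ S : Finset V, S.Nonempty → S ≠ univ → 2 ≤ ⟪cutVec G S, y⟫) (v₀ : V) :
    ∃ L : Finset (Finset V), IsLaminar L ∧ (∀ S ∈ L, S.Nonempty ∧ S ⊆ univ.erase v₀) ∧
      ∀ S : Finset V, S.Nonempty → S ≠ univ → ⟪cutVec G S, y⟫ = 2 →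
        cutVec G S ∈ Submodule.span ℝ ((fun e => EuclideanSpace.single e 1) '' {e | y e = 0}) ⊔
          Submodule.span ℝ (cutVec G '' L) := by
  -- every tight cut has a shore avoiding `v₀`
  set T := univ.filter fun S : Finset V => S.Nonempty ∧ v₀ ∉ S ∧ ⟪cutVec G S, y⟫ = 2
  have hne_univ {S : Finset V} (hS : v₀ ∉ S) : S ≠ univ := fun h => hS (h ▸ mem_univ v₀)
  have huncross : ∀ S ∈ T, ∀ R ∈ T, Crosses S R → S ∩ R ∈ T ∧ S ∪ R ∈ T ∧
      cutVec G S + cutVec G R - cutVec G (S ∩ R) - cutVec G (S ∪ R) ∈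
        Submodule.span ℝ ((fun e => EuclideanSpace.single e 1) '' {e | y e = 0}) := by
    intro S hS R hR hSR
    simp only [T, mem_filter, mem_univ, true_and] at hS hR ⊢
    have hinter : (S ∩ R).Nonempty := not_disjoint_iff_nonempty_inter.1 hSR.2.2
    have hunion : (S ∪ R).Nonempty := hS.1.mono subset_union_left
    have hv₀inter : v₀ ∉ S ∩ R := fun h => hS.2.1 (mem_inter.1 h).1
    have hv₀union : v₀ ∉ S ∪ R := by simp [hS.2.1, hR.2.1]
    obtain ⟨h₁, h₂, hW⟩ := uncross_tight G hy hS.2.2 hR.2.2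
      (hcut _ hinter (hne_univ hv₀inter)) (hcut _ hunion (hne_univ hv₀union))
    exact ⟨⟨hinter, hv₀inter, h₁⟩, ⟨hunion, hv₀union, h₂⟩, hW⟩
  obtain ⟨L, hLT, hL, hspan⟩ := exists_laminar_span_of_uncrossing T (cutVec G) _ huncross
  refine ⟨L, hL, fun S hS => ?_, fun S hS hSu htight => ?_⟩
  · obtain ⟨hne, hv₀, -⟩ := (mem_filter.1 (hLT hS)).2
    exact ⟨hne, fun v hv => mem_erase.2 ⟨fun h => hv₀ (h ▸ hv), mem_univ v⟩⟩
  by_cases hv₀ : v₀ ∈ S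
  · rw [← cutVec_compl]
    refine hspan _ (mem_filter.2 ⟨mem_univ _, ?_, by simp [hv₀], by rwa [cutVec_compl]⟩)
    rwa [nonempty_iff_ne_empty, Ne, compl_eq_empty_iff]
  · exact hspan S (mem_filter.2 ⟨mem_univ _, hS, hv₀, htight⟩)

end Cuts

section RestrictedLP

open Finset
open scoped RealInnerProductSpace

variable (G : SimpleGraph V)

lemma feas2ECSS_iff {y : Sym2 V → ℝ} : Feas2ECSS G y ↔ (∀ e ∈ G.edgeSet, 0 ≤ y e) ∧
    ∀ S : Finset V, S.Nonempty → S ≠ univ → 2 ≤ cutSum G y S := by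
  refine and_congr_right fun _ =>
    ⟨fun h S hne hS => h S (by simpa) (by simpa), fun h S hne hS => ?_⟩
  simpa using h S.toFinset (by simpa) (by simpa using hS)

lemma cutSum_indicator_edgeSet (y : Sym2 V → ℝ) (S : Set V) :
    cutSum G (G.edgeSet.indicator y) S = cutSum G y S :=
  Finset.sum_congr rfl fun e _ => by split_ifs with h <;> simp [h]

omit [DecidableEq V] in
lemma lpCost_indicator_edgeSet (c y : Sym2 V → ℝ) :
    lpCost G c (G.edgeSet.indicator y) = lpCost G c y :=
  Finset.sum_congr rfl fun e _ => by split_ifs with h <;> simp [h]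

omit [DecidableEq V] in
lemma inner_toLp_indicator_edgeSet (c : Sym2 V → ℝ) (y : EuclideanSpace ℝ (Sym2 V)) :
    ⟪WithLp.toLp 2 (G.edgeSet.indicator c), y⟫ = lpCost G c y := by
  simp [PiLp.inner_apply, lpCost, Set.indicator_apply, mul_comm]

variable (F : Finset (Sym2 V)) (c : Sym2 V → ℝ) (K : ℝ)

abbrev RestrictedLPIndex :=
  Sym2 V ⊕ {e // e ∉ F} ⊕ {S : Finset V // S.Nonempty ∧ S ≠ univ} ⊕ Unit

/-- The 2ECSS LP with support in `F` and cost at most `K`, written as `⟪a i, y⟫ ≤ b i`: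
the rows are `-y_e ≤ 0`, `y_e ≤ 0` for `e ∉ F`, `-cut(S) ≤ -2` and `cost ≤ K`. -/
def restrictedLPRow : RestrictedLPIndex F → EuclideanSpace ℝ (Sym2 V) :=
  Sum.elim (fun e => -EuclideanSpace.single e 1) <|
    Sum.elim (fun e => EuclideanSpace.single e.1 1) <|
      Sum.elim (fun S => -cutVec G S.1) fun _ => WithLp.toLp 2 (G.edgeSet.indicator c)

def restrictedLPBound : RestrictedLPIndex F → ℝ :=
  Sum.elim 0 <| Sum.elim 0 <| Sum.elim (fun _ => -2) fun _ => K

variable {G F c K}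

lemma restrictedLP_feasible_iff {y : EuclideanSpace ℝ (Sym2 V)} :
    (∀ i, ⟪restrictedLPRow G F c i, y⟫ ≤ restrictedLPBound F K i) ↔
      (∀ e, 0 ≤ y e) ∧ (∀ e ∉ F, y e ≤ 0) ∧
        (∀ S : Finset V, S.Nonempty → S ≠ univ → 2 ≤ cutSum G y S) ∧ lpCost G c y ≤ K := by
  simp [restrictedLPRow, restrictedLPBound, Sum.forall, inner_cutVec,
    inner_toLp_indicator_edgeSet, EuclideanSpace.inner_single_left]

lemma span_range_restrictedLPRow :
    Submodule.span ℝ (Set.range (restrictedLPRow G F c)) = ⊤ := by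
  refine eq_top_iff.2 ((EuclideanSpace.basisFun (Sym2 V) ℝ).toBasis.span_eq ▸
    Submodule.span_le.2 ?_)
  rintro _ ⟨e, rfl⟩
  have he : restrictedLPRow G F c (Sum.inl e) ∈
      Submodule.span ℝ (Set.range (restrictedLPRow G F c)) := Submodule.subset_span ⟨_, rfl⟩
  simpa [restrictedLPRow] using neg_mem he

theorem card_lpSupport_le_of_span_tightSet_eq_top [Nonempty V] {y : EuclideanSpace ℝ (Sym2 V)}
    (hy : ∀ i, ⟪restrictedLPRow G F c i, y⟫ ≤ restrictedLPBound F K i)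
    (htop : Submodule.span ℝ
      (restrictedLPRow G F c '' tightSet (restrictedLPRow G F c) (restrictedLPBound F K) y) = ⊤) :
    #(lpSupport G y) ≤ 2 * Fintype.card V - 1 := by
  obtain ⟨v₀⟩ := ‹Nonempty V›
  obtain ⟨hy0, hyF, hcut, -⟩ := restrictedLP_feasible_iff.1 hy
  obtain ⟨L, hL, hLX, hLspan⟩ := exists_laminar_span_tight_cutVec G hy0
    (by simpa only [inner_cutVec] using hcut) v₀
  set s := L.image (cutVec G) ∪ {WithLp.toLp 2 (G.edgeSet.indicator c)}
  set W := Submodule.span ℝ ((EuclideanSpace.single · (1 : ℝ)) '' {e | y e = 0}) ⊔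
    Submodule.span ℝ (s : Set (EuclideanSpace ℝ (Sym2 V)))
  have hsingle (e : Sym2 V) (he : y e = 0) : EuclideanSpace.single e (1 : ℝ) ∈ W :=
    Submodule.mem_sup_left (Submodule.subset_span ⟨e, he, rfl⟩)
  have hrows : ⊤ ≤ W := by
    rw [← htop, Submodule.span_le]
    rintro _ ⟨(e | e | S | _), hi, rfl⟩ <;>
      simp only [mem_coe, mem_tightSet, restrictedLPRow, restrictedLPBound, Sum.elim_inl,
        Sum.elim_inr, EuclideanSpace.inner_single_left, inner_neg_left] at hi ⊢
    · exact neg_mem (hsingle e (by simpa using hi))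
    · exact hsingle e (le_antisymm (hyF e e.2) (hy0 e))
    · have hLs : cutVec G '' L ⊆ s := Set.image_subset_iff.2 fun S hS =>
        mem_coe.2 (mem_union_left _ (mem_image_of_mem _ hS))
      have hle : Submodule.span ℝ ((EuclideanSpace.single · (1 : ℝ)) '' {e | y e = 0}) ⊔
          Submodule.span ℝ (cutVec G '' L) ≤ W := sup_le_sup_left (Submodule.span_mono hLs) _
      exact neg_mem (hle (hLspan S S.2.1 S.2.2 (by linarith)))
    · exact Submodule.mem_sup_right (Submodule.subset_span (by simp [s]))
  have hs : #s ≤ #L + 1 := (card_union_le _ _).trans (add_le_add card_image_le le_rfl)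
  have hLcard := hL.card_le hLX
  rw [card_erase_of_mem (mem_univ v₀), card_univ] at hLcard
  have hsupp : lpSupport G y ⊆ univ.filter fun e => y e ≠ 0 :=
    monotone_filter_right _ fun e _ he => he.2
  have := (card_le_card hsupp).trans (EuclideanSpace.card_filter_ne_zero_le_of_top_le_span hrows)
  have := Fintype.card_pos (α := V)
  omega

end RestrictedLP

section Sparsify

open Finset
open scoped RealInnerProductSpace

theorem exists_feas2ECSS_card_lpSupport_le [Nonempty V] (G : SimpleGraph V) (c x : Sym2 V → ℝ)
    (hx : Feas2ECSS G x) :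
    ∃ y : Sym2 V → ℝ, Feas2ECSS G y ∧ lpSupport G y ⊆ lpSupport G x ∧
      #(lpSupport G y) ≤ 2 * Fintype.card V - 1 ∧ lpCost G c y ≤ lpCost G c x := by
  rw [feas2ECSS_iff] at hx
  set F := lpSupport G x
  have hx₀ : ∀ i, ⟪restrictedLPRow G F c i, WithLp.toLp 2 (G.edgeSet.indicator x)⟫ ≤
      restrictedLPBound F (lpCost G c x) i := by
    refine restrictedLP_feasible_iff.2 ⟨fun e => ?_, fun e he => ?_, fun S hS hSu => ?_, ?_⟩
    · exact Set.indicator_nonneg hx.1 e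
    · by_cases hG : e ∈ G.edgeSet
      · simp [F, lpSupport, hG] at he
        simp [hG, he]
      · simp [hG]
    · simpa [cutSum_indicator_edgeSet] using hx.2 S hS hSu
    · simp [lpCost_indicator_edgeSet]
  obtain ⟨y, hy, htop⟩ := exists_tightSet_span_eq_top _ _ span_range_restrictedLPRow hx₀
  obtain ⟨hy0, hyF, hcut, hcost⟩ := restrictedLP_feasible_iff.1 hy
  refine ⟨y, (feas2ECSS_iff G).2 ⟨fun e _ => hy0 e, hcut⟩, fun e he => by_contra fun heF => ?_,
    card_lpSupport_le_of_span_tightSet_eq_top hy htop, hcost⟩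
  exact (mem_filter.1 he).2.2 (le_antisymm (hyF e heF) (hy0 e))

omit [DecidableEq V] in
lemma lpCost_nonneg {G : SimpleGraph V} {c x : Sym2 V → ℝ} (hc : ∀ e ∈ G.edgeSet, 0 ≤ c e)
    (hx : ∀ e ∈ G.edgeSet, 0 ≤ x e) : 0 ≤ lpCost G c x :=
  sum_nonneg fun e _ => by
    split_ifs with he
    exacts [mul_nonneg (hc e he) (hx e he), le_rfl]

end Sparsify

lemma natCast_le_mul_log_div_sq {n m : ℕ} {ε : ℝ} (hn : 2 ≤ n) (hm : m ≤ 2 * n) (hε0 : 0 < ε)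
    (hε1 : ε < 1) : (m : ℝ) ≤ 4 * n * Real.log n / ε ^ 2 := by
  have hn' : (2 : ℝ) ≤ n := by exact_mod_cast hn
  have hlog : 1 / 2 < Real.log n :=
    (Real.log_two_gt_d9.trans_le' (by norm_num)).trans_le (Real.log_le_log two_pos hn')
  have hε2 : ε ^ 2 ≤ 1 := pow_le_one₀ hε0.le hε1.le
  rw [le_div_iff₀ (by positivity)]
  calc (m : ℝ) * ε ^ 2 ≤ 2 * n * 1 := mul_le_mul (by exact_mod_cast hm) hε2 (by positivity)
        (by positivity)
    _ ≤ 4 * n * Real.log n := by nlinarith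

/-- Sparsification of 2ECSS LP solutions (Theorem: sparsifying-2ecss). -/
theorem sparsify_2ecss_solution :
    ∃ C : ℝ, 0 < C ∧
      ∀ (V : Type) [Fintype V] [DecidableEq V] (G : SimpleGraph V)
        (c x : Sym2 V → ℝ) (ε : ℝ),
        2 ≤ Fintype.card V →
        (∀ e ∈ G.edgeSet, 0 ≤ c e) →
        0 < ε → ε < 1 →
        Feas2ECSS G x →
        ∃ y : Sym2 V → ℝ,
          Feas2ECSS G y ∧
          lpSupport G y ⊆ lpSupport G x ∧
          ((lpSupport G y).card : ℝ) ≤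
            C * Fintype.card V * Real.log (Fintype.card V) / ε ^ 2 ∧
          lpCost G c y ≤ (1 + ε) * lpCost G c x := by
  refine ⟨4, by norm_num, fun V _ _ G c x ε hn hc hε0 hε1 hx => ?_⟩
  have : Nonempty V := Fintype.card_pos_iff.1 (by omega)
  obtain ⟨y, hy, hsupp, hcard, hcost⟩ := exists_feas2ECSS_card_lpSupport_le G c x hx
  refine ⟨y, hy, hsupp, natCast_le_mul_log_div_sq hn (by omega) hε0 hε1, hcost.trans ?_⟩
  nlinarith [lpCost_nonneg hc hx.1]
end
end

section
/- Let V be a finite set with |V| ≥ 3, let c be a metric cost on the complete graph over V, let H be a Hamiltonian cycle on V, and let T ⊆ V be a nonempty set of even cardinality. Then there exists a T-join J of the complete graph over V whose cost is at most half the cost of H. In particular, the minimum cost of a T-join is at most half the minimum cost of a Hamiltonian cycle. -/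
open scoped Classical

noncomputable section

variable {V : Type*} [Fintype V] [DecidableEq V]

/-- A metric cost on the complete graph over `V`, given as a (symmetric) function
on unordered pairs: nonnegative, zero on the diagonal, and satisfying the
triangle inequality. -/
def IsMetricCost {V : Type*} (c : Sym2 V → ℝ) : Prop :=
  (∀ e, 0 ≤ c e) ∧ (∀ v, c s(v, v) = 0) ∧
    ∀ u v w, c s(u, w) ≤ c s(u, v) + c s(v, w)

/-- The degree of a vertex `v` in a set of edges `M`. -/
def degIn (M : Finset (Sym2 V)) (v : V) : ℕ := (M.filter fun e => v ∈ e).card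

/-- `M` is a spanning tree of `G`: a set of edges of `G` forming a connected
acyclic subgraph on all of `V`. -/
def IsSpanningTree (G : SimpleGraph V) (M : Finset (Sym2 V)) : Prop :=
  (M : Set (Sym2 V)) ⊆ G.edgeSet ∧ (SimpleGraph.fromEdgeSet (M : Set (Sym2 V))).IsTree

/-- `J` is a `T`-join of `G`: a set of edges of `G` such that the vertices of odd
degree in `J` are exactly those of `T`. -/
def IsTJoin (G : SimpleGraph V) (T : Set V) (J : Finset (Sym2 V)) : Prop :=
  (J : Set (Sym2 V)) ⊆ G.edgeSet ∧ ∀ v, v ∈ T ↔ Odd (degIn J v)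

/-! Start the Hamiltonian cycle at some `t ∈ T` and list the vertices of `T` in the order the
cycle visits them: `t = t₁, t₂, …, t₂ₖ`. Shortcutting the cycle (triangle inequality) shows that
the closed tour `t₁ t₂ ⋯ t₂ₖ t₁` costs at most the cycle. This tour is the disjoint union of the
perfect matchings `{t₁t₂, t₃t₄, …}` and `{t₂t₃, …, t₂ₖt₁}` of `T`, both of which are `T`-joins,
so the cheaper one costs at most half the cycle. -/

variable {α : Type*}

namespace List

def pairEdges : List α → List (Sym2 α)
  | a :: b :: l => s(a, b) :: pairEdges l
  | _ => []

def pathCost (c : Sym2 α → ℝ) : List α → ℝ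
  | a :: b :: l => c s(a, b) + pathCost c (b :: l)
  | _ => 0

@[simp] lemma pairEdges_nil : pairEdges ([] : List α) = [] := rfl
@[simp] lemma pairEdges_singleton (a : α) : pairEdges [a] = [] := rfl
@[simp] lemma pairEdges_cons_cons (a b : α) (l : List α) :
    pairEdges (a :: b :: l) = s(a, b) :: pairEdges l := rfl

@[simp] lemma pathCost_nil (c : Sym2 α → ℝ) : pathCost c [] = 0 := rfl
@[simp] lemma pathCost_singleton (c : Sym2 α → ℝ) (a : α) : pathCost c [a] = 0 := rfl
@[simp] lemma pathCost_cons_cons (c : Sym2 α → ℝ) (a b : α) (l : List α) :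
    pathCost c (a :: b :: l) = c s(a, b) + pathCost c (b :: l) := rfl

lemma pairEdges_append : ∀ {l₁ : List α} (l₂ : List α), Even l₁.length →
    pairEdges (l₁ ++ l₂) = pairEdges l₁ ++ pairEdges l₂
  | [], _, _ => rfl
  | [_], _, h => absurd h (by simp)
  | _ :: _ :: l₁, l₂, h => by
    simp [pairEdges_append (l₁ := l₁) l₂ (by simpa [Nat.even_add_one] using h)]

lemma mem_of_mem_pairEdges : ∀ {l : List α} {e : Sym2 α} {v : α},
    e ∈ pairEdges l → v ∈ e → v ∈ l
  | _ :: _ :: _, _, _, he, hv => by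
    simp only [pairEdges_cons_cons, mem_cons] at he
    rcases he with rfl | he
    · rcases Sym2.mem_iff.mp hv with rfl | rfl <;> simp
    · exact mem_cons_of_mem _ (mem_cons_of_mem _ (mem_of_mem_pairEdges he hv))

lemma Nodup.not_isDiag_of_mem_pairEdges : ∀ {l : List α}, l.Nodup → ∀ e ∈ pairEdges l, ¬e.IsDiag
  | _ :: _ :: _, h, e, he => by
    rw [nodup_cons, nodup_cons] at h
    simp only [pairEdges_cons_cons, mem_cons] at he
    rcases he with rfl | he
    · exact fun hd => h.1 (Sym2.mk_isDiag_iff.mp hd ▸ mem_cons_self)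
    · exact Nodup.not_isDiag_of_mem_pairEdges h.2.2 e he

lemma nodup_pairEdges : ∀ {l : List α}, l.Nodup → (pairEdges l).Nodup
  | [], _ | [_], _ => by simp
  | a :: _ :: _, h => by
    rw [nodup_cons, nodup_cons] at h
    refine nodup_cons.mpr ⟨fun he => h.1 ?_, nodup_pairEdges h.2.2⟩
    exact mem_cons_of_mem _ (mem_of_mem_pairEdges he (Sym2.mem_mk_left _ _))

lemma countP_mem_pairEdges [DecidableEq α] (v : α) : ∀ {l : List α}, l.Nodup →
    Even l.length → (pairEdges l).countP (v ∈ ·) = if v ∈ l then 1 else 0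
  | [], _, _ => by simp
  | [_], _, h => absurd h (by simp)
  | a :: b :: l, h, he => by
    have ih := countP_mem_pairEdges v h.of_cons.of_cons (by simpa [Nat.even_add_one] using he)
    rw [pairEdges_cons_cons, countP_cons, ih]
    simp only [nodup_cons, mem_cons] at h
    by_cases hva : v = a <;> by_cases hvb : v = b <;> by_cases hvl : v ∈ l <;> simp_all

lemma pathCost_eq_add (c : Sym2 α → ℝ) : ∀ l : List α,
    pathCost c l = ((pairEdges l).map c).sum + ((pairEdges l.tail).map c).sum
  | [] | [_] => by simp
  | a :: b :: l => by
    rw [pathCost_cons_cons, pathCost_eq_add c (b :: l)]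
    simp only [pairEdges_cons_cons, map_cons, sum_cons, tail_cons]
    ring

end List

namespace IsMetricCost

variable {c : Sym2 α → ℝ}

lemma pathCost_cons_le (hc : IsMetricCost c) (a x : α) :
    ∀ l : List α, (a :: l).pathCost c ≤ c s(a, x) + (x :: l).pathCost c
  | [] => by simpa using hc.1 s(a, x)
  | y :: l => by
    simp only [List.pathCost_cons_cons]
    linarith [hc.2.2 a x y]

lemma pathCost_cons_le_of_sublist (hc : IsMetricCost c) {l₁ l₂ : List α} (h : l₁.Sublist l₂) :
    ∀ a : α, (a :: l₁).pathCost c ≤ (a :: l₂).pathCost c := by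
  induction h with
  | slnil => simp
  | cons x _ ih => exact fun a => (hc.pathCost_cons_le a x _).trans (by simp [ih x])
  | cons_cons x _ ih => exact fun a => by simp [ih x]

end IsMetricCost

lemma SimpleGraph.Walk.pathCost_support {G : SimpleGraph α} (c : Sym2 α → ℝ) :
    ∀ {u v : α} (p : G.Walk u v), p.support.pathCost c = (p.edges.map c).sum
  | _, _, .nil => rfl
  | _, _, .cons _ q => by
    rw [support_cons, ← q.cons_tail_support, List.pathCost_cons_cons, q.cons_tail_support,
      q.pathCost_support, edges_cons, List.map_cons, List.sum_cons]

lemma SimpleGraph.Walk.IsHamiltonianCycle.exists_support_eq [DecidableEq α]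
    {G : SimpleGraph α} {t : α} {p : G.Walk t t} (hp : p.IsHamiltonianCycle) :
    ∃ D : List α, p.support = t :: D ++ [t] ∧ (t :: D).Nodup ∧ ∀ u, u ∈ t :: D := by
  have hnil := hp.isCycle.not_nil
  refine ⟨p.dropLast.support.tail, ?_, ?_, fun u => ?_⟩
  · rw [cons_tail_support, support_dropLast_concat hnil]
  · rw [cons_tail_support, support_dropLast hnil]
    exact hp.isCycle.nodup_dropLast_support
  · have hu := hp.mem_support u
    rw [← support_dropLast_concat hnil, List.mem_append, List.mem_singleton] at hu
    rw [cons_tail_support]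
    rcases hu with hu | rfl
    exacts [hu, p.dropLast.start_mem_support]

lemma isTJoin_pairEdges [DecidableEq α] {l : List α} (hl : l.Nodup) (heven : Even l.length) :
    IsTJoin ⊤ (l.toFinset : Set α) l.pairEdges.toFinset := by
  refine ⟨fun e he => ?_, fun v => ?_⟩
  · simpa [SimpleGraph.edgeSet_top] using hl.not_isDiag_of_mem_pairEdges e (by simpa using he)
  · have hdeg : degIn l.pairEdges.toFinset v = if v ∈ l then 1 else 0 := by
      have hfilter :
          {e ∈ l.pairEdges.toFinset | v ∈ e} = (l.pairEdges.filter (v ∈ ·)).toFinset := by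
        ext; simp
      rw [degIn, hfilter, List.toFinset_card_of_nodup
        ((List.nodup_pairEdges hl).filter _), ← List.countP_eq_length_filter,
        List.countP_mem_pairEdges v hl heven]
    by_cases hv : v ∈ l <;> simp [hdeg, hv]

lemma sum_toFinset_pairEdges [DecidableEq α] {l : List α} (hl : l.Nodup) (c : Sym2 α → ℝ) :
    ∑ e ∈ l.pairEdges.toFinset, c e = (l.pairEdges.map c).sum :=
  List.sum_toFinset c (List.nodup_pairEdges hl)

lemma exists_isTJoin_le_half_pathCost [DecidableEq α] (c : Sym2 α → ℝ) {t : α}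
    {F : List α} (hnd : (t :: F).Nodup) (heven : Even (t :: F).length) :
    ∃ J : Finset (Sym2 α), IsTJoin ⊤ ((t :: F).toFinset : Set α) J ∧
      ∑ e ∈ J, c e ≤ 1 / 2 * (t :: F ++ [t]).pathCost c := by
  have hperm : (F ++ [t]).Perm (t :: F) := List.perm_append_singleton t F
  have hnd' : (F ++ [t]).Nodup := hperm.nodup_iff.mpr hnd
  have heven' : Even (F ++ [t]).length := hperm.length_eq ▸ heven
  have hsplit : (t :: F ++ [t]).pathCost c =
      ((t :: F).pairEdges.map c).sum + ((F ++ [t]).pairEdges.map c).sum := by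
    rw [List.pathCost_eq_add, List.pairEdges_append _ heven]
    simp
  rcases le_total ((t :: F).pairEdges.map c).sum ((F ++ [t]).pairEdges.map c).sum with h | h
  · refine ⟨_, isTJoin_pairEdges hnd heven, ?_⟩
    rw [sum_toFinset_pairEdges hnd]
    linarith
  · refine ⟨_, List.toFinset_eq_of_perm _ _ hperm ▸ isTJoin_pairEdges hnd' heven', ?_⟩
    rw [sum_toFinset_pairEdges hnd']
    linarith

theorem exists_tjoin_le_half_ham_general {V : Type} [DecidableEq V]
    (c : Sym2 V → ℝ) (hc : IsMetricCost c)
    (v : V) (w : (⊤ : SimpleGraph V).Walk v v) (hw : w.IsHamiltonianCycle)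
    (T : Finset V) (hT : T.Nonempty) (hTeven : Even T.card) :
    ∃ J : Finset (Sym2 V), IsTJoin (⊤ : SimpleGraph V) (T : Set V) J ∧
      ∑ e ∈ J, c e ≤ (1 / 2) * (w.edges.map c).sum := by
  obtain ⟨t, htT⟩ := hT
  have ht : t ∈ w.support := hw.mem_support t
  obtain ⟨D, hsupp, hnd, hmem⟩ := (hw.rotate ht).exists_support_eq
  set F := D.filter (· ∈ T)
  have hFnd : (t :: F).Nodup := hnd.sublist (D.filter_sublist.cons_cons t)
  have hFT : (t :: F).toFinset = T := by
    ext u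
    simp only [F, List.toFinset_cons, List.toFinset_filter, Finset.mem_insert,
      Finset.mem_filter, List.mem_toFinset, decide_eq_true_eq]
    rcases List.mem_cons.mp (hmem u) with rfl | hu <;> grind
  have heven : Even (t :: F).length := by
    rwa [← List.toFinset_card_of_nodup hFnd, hFT]
  have htour : (t :: F ++ [t]).pathCost c ≤ (w.edges.map c).sum := calc
    _ ≤ (t :: D ++ [t]).pathCost c := hc.pathCost_cons_le_of_sublist
          (D.filter_sublist.append_right [t]) t
    _ = ((w.rotate t ht).edges.map c).sum := by rw [← hsupp, SimpleGraph.Walk.pathCost_support]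
    _ = (w.edges.map c).sum := ((w.rotate_edges t ht).map c).perm.sum_eq
  obtain ⟨J, hJ, hcost⟩ := exists_isTJoin_le_half_pathCost c hFnd heven
  exact ⟨J, hFT ▸ hJ, hcost.trans (by linarith)⟩

/-- For any Hamiltonian cycle `H` on a metric complete graph and any nonempty even
set `T`, there is a `T`-join of cost at most half the cost of `H`.  In particular,
the minimum cost of a `T`-join is at most half the minimum cost of a Hamiltonian
cycle. -/
theorem exists_tjoin_le_half_ham {V : Type} [Fintype V] [DecidableEq V]
    (c : Sym2 V → ℝ) (hc : IsMetricCost c) (hn : 3 ≤ Fintype.card V)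
    (v : V) (w : (⊤ : SimpleGraph V).Walk v v) (hw : w.IsHamiltonianCycle)
    (T : Finset V) (hT : T.Nonempty) (hTeven : Even T.card) :
    ∃ J : Finset (Sym2 V), IsTJoin (⊤ : SimpleGraph V) (T : Set V) J ∧
      ∑ e ∈ J, c e ≤ (1 / 2) * (w.edges.map c).sum :=
  exists_tjoin_le_half_ham_general c hc v w hw T hT hTeven
end
end

section
/- Let V be a finite set with |V| ≥ 3 and let c be a metric cost on the complete graph over V. Let F be a finite multiset of edges on V (unordered pairs of distinct vertices) such that the multigraph (V,F) is connected, touches every vertex of V, and every vertex has even degree in F (counting multiplicity). Then there exists a Hamiltonian cycle on V whose cost is at most Σ_{e ∈ F} c_e, where the sum counts edges with multiplicity. -/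
open scoped Classical

noncomputable section

variable {V : Type*} [Fintype V] [DecidableEq V]

/-- The degree of a vertex in a multiset of edges, counted with multiplicity. -/
def multiDeg (F : Multiset (Sym2 V)) (v : V) : ℕ :=
  (F.filter fun e => v ∈ e).card

/-!
A longest walk of the complete graph that uses each edge of `F` at most as often as `F` does is
closed: otherwise its endpoint has odd degree in it, so an unused edge of `F` there would extend it.
Rotating it to start at any vertex of its support shows in the same way that no unused edge of `F`
touches the support, so by connectivity it is an Eulerian circuit of `F`. Following the circuit and
skipping vertices already visited gives a Hamiltonian path, and by the triangle inequality each
jump over skipped vertices, as well as the closing edge, costs at most the part of the circuit it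
replaces.
-/

namespace SimpleGraph.Walk

variable {α : Type*} {G : SimpleGraph α}

theorem even_countP_edges_iff [DecidableEq α] {u v : α} (p : G.Walk u v) (x : α) :
    Even (p.edges.countP (x ∈ ·)) ↔ (x = u ↔ x = v) := by
  induction p with
  | nil => simp
  | cons h p ih =>
    have := h.ne
    simp only [edges_cons, List.countP_cons, Sym2.mem_iff, decide_eq_true_eq]
    split_ifs <;> grind [Nat.even_add_one]

theorem coe_edges_rotate [DecidableEq α] {v : α} (c : G.Walk v v) (u : α) (h : u ∈ c.support) :
    ((c.rotate u h).edges : Multiset (Sym2 α)) = c.edges :=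
  Multiset.coe_eq_coe.mpr (rotate_edges c u h).perm

theorem IsHamiltonian.exists_isHamiltonianCycle_cons [Fintype α] [DecidableEq α] {a z : α}
    {p : (⊤ : SimpleGraph α).Walk z a} (hp : p.IsHamiltonian)
    (hcard : 3 ≤ Fintype.card α) :
    ∃ h : (⊤ : SimpleGraph α).Adj a z, (p.cons h).IsHamiltonianCycle := by
  have hlen : 2 ≤ p.length := by rw [hp.length_eq]; omega
  have haz : (⊤ : SimpleGraph α).Adj a z := by
    refine (top_adj a z).mpr ?_
    rintro rfl
    have := length_eq_zero_iff.mpr (isPath_iff_nil.mp hp.isPath)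
    omega
  refine ⟨haz, (cons_isCycle_iff p haz).mpr ⟨hp.isPath, fun he => ?_⟩, ?_⟩
  · rw [Sym2.eq_swap] at he
    have := hp.isPath.length_eq_one_of_mem_edges he
    omega
  · simpa [IsHamiltonian] using hp

end SimpleGraph.Walk

section Eulerian

open SimpleGraph Walk

variable {α : Type*}

/-- Walks in `⊤` whose edge multiset lies below `F` are the trails of the multigraph `F`. -/
def IsLongestWalkIn (F : Multiset (Sym2 α)) {a b : α} (w : (⊤ : SimpleGraph α).Walk a b) :
    Prop :=
  (w.edges : Multiset (Sym2 α)) ≤ F ∧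
    ∀ ⦃a' b' : α⦄ (w' : (⊤ : SimpleGraph α).Walk a' b'),
      (w'.edges : Multiset (Sym2 α)) ≤ F → w'.length ≤ w.length

theorem exists_isLongestWalkIn [Nonempty α] (F : Multiset (Sym2 α)) :
    ∃ (a b : α) (w : (⊤ : SimpleGraph α).Walk a b), IsLongestWalkIn F w := by
  let P n := ∃ (a b : α) (w : (⊤ : SimpleGraph α).Walk a b),
    (w.edges : Multiset (Sym2 α)) ≤ F ∧ w.length = n
  have hbound : ∀ n, P n → n ≤ F.card := by
    rintro n ⟨a, b, w, hw, rfl⟩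
    simpa using Multiset.card_le_card hw
  have hnil : P 0 := ⟨_, _, nil (u := Classical.arbitrary α), by simp, rfl⟩
  obtain ⟨a, b, w, hw, hlen⟩ : P (Nat.findGreatest P F.card) :=
    Nat.findGreatest_spec (Nat.zero_le _) hnil
  refine ⟨a, b, w, hw, fun a' b' w' hw' => hlen ▸ ?_⟩
  exact Nat.le_findGreatest (hbound _ ⟨a', b', w', hw', rfl⟩) ⟨a', b', w', hw', rfl⟩

variable [DecidableEq α] {F : Multiset (Sym2 α)}

theorem IsLongestWalkIn.notMem_of_mem_tsub (hF : ∀ e ∈ F, ¬ e.IsDiag) {a b : α}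
    {w : (⊤ : SimpleGraph α).Walk a b} (hw : IsLongestWalkIn F w) {e : Sym2 α}
    (he : e ∈ F - w.edges) : b ∉ e := by
  intro hb
  obtain ⟨y, rfl⟩ := Sym2.mem_iff_exists.mp hb
  have hby : (⊤ : SimpleGraph α).Adj b y := by
    simpa using hF _ (Multiset.mem_of_le tsub_le_self he)
  have hle : ((w.concat hby).edges : Multiset (Sym2 α)) ≤ F :=
    calc ((w.concat hby).edges : Multiset (Sym2 α)) = w.edges + {s(b, y)} := by
          simp [edges_concat, ← Multiset.coe_add]
      _ ≤ w.edges + (F - w.edges) := add_le_add_right (Multiset.singleton_le.mpr he) _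
      _ = F := add_tsub_cancel_of_le hw.1
  simpa using hw.2 _ hle

theorem IsLongestWalkIn.rotate {a x : α} {w : (⊤ : SimpleGraph α).Walk a a}
    (hw : IsLongestWalkIn F w) (hx : x ∈ w.support) : IsLongestWalkIn F (w.rotate x hx) := by
  simpa [IsLongestWalkIn, coe_edges_rotate] using hw

theorem IsLongestWalkIn.start_eq_end (hF : ∀ e ∈ F, ¬ e.IsDiag)
    (heven : ∀ x, Even (F.countP (x ∈ ·))) {a b : α} {w : (⊤ : SimpleGraph α).Walk a b}
    (hw : IsLongestWalkIn F w) : a = b := by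
  by_contra hab
  have hodd : ¬ Even ((w.edges : Multiset (Sym2 α)).countP (b ∈ ·)) := by
    simpa [Multiset.coe_countP, even_countP_edges_iff] using Ne.symm hab
  have hpos : 0 < (F - w.edges).countP (b ∈ ·) := by
    have := Multiset.countP_le_of_le (b ∈ ·) hw.1
    have := heven b
    rw [Multiset.countP_sub hw.1]
    grind
  obtain ⟨e, he, hbe⟩ := Multiset.countP_pos.mp hpos
  exact hw.notMem_of_mem_tsub hF he hbe

theorem IsLongestWalkIn.notMem_support (hF : ∀ e ∈ F, ¬ e.IsDiag) {a : α}
    {w : (⊤ : SimpleGraph α).Walk a a} (hw : IsLongestWalkIn F w) {e : Sym2 α}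
    (he : e ∈ F - w.edges) {x : α} (hxe : x ∈ e) : x ∉ w.support := fun hx =>
  (hw.rotate hx).notMem_of_mem_tsub hF (by rwa [coe_edges_rotate]) hxe

theorem exists_eulerian_circuit [Nonempty α] (hF : ∀ e ∈ F, ¬ e.IsDiag)
    (heven : ∀ x, Even (F.countP (x ∈ ·))) (hconn : (fromEdgeSet {e | e ∈ F}).Connected) :
    ∃ (a : α) (w : (⊤ : SimpleGraph α).Walk a a),
      (w.edges : Multiset (Sym2 α)) = F ∧ ∀ x, x ∈ w.support := by
  obtain ⟨a, b, w, hw⟩ := exists_isLongestWalkIn F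
  obtain rfl := hw.start_eq_end hF heven
  have hcover : ∀ y, y ∈ w.support := by
    intro y
    by_contra hy
    obtain ⟨q⟩ := hconn.preconnected a y
    obtain ⟨d, -, hd, hd'⟩ :=
      q.exists_boundary_dart {x | x ∈ w.support} w.start_mem_support hy
    have hdF : s(d.fst, d.snd) ∈ F := ((fromEdgeSet_adj _).mp d.adj).1
    have hdw : s(d.fst, d.snd) ∉ w.edges := fun h => hd' (w.snd_mem_support_of_mem_edges h)
    have : s(d.fst, d.snd) ∈ F - w.edges := by
      rw [Multiset.mem_sub, Multiset.count_eq_zero.mpr (by simpa using hdw)]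
      exact Multiset.count_pos.mpr hdF
    exact hw.notMem_support hF this (Sym2.mem_mk_left _ _) hd
  refine ⟨a, w, le_antisymm hw.1 ?_, hcover⟩
  rw [← tsub_eq_zero_iff_le, Multiset.eq_zero_iff_forall_notMem]
  exact fun e he => hw.notMem_support hF he (Sym2.out_fst_mem e) (hcover _)

/-- `q` is the shortcut path built so far, reversed, with newest vertex `z`; the term `c s(a, z)`
pays for jumping from `z` to the current vertex `a` of `w`. -/
theorem exists_isPath_shortcut {c : Sym2 α → ℝ} (hc : IsMetricCost c) {a v : α}
    (w : (⊤ : SimpleGraph α).Walk a v) {z u : α} (q : (⊤ : SimpleGraph α).Walk z u)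
    (hq : q.IsPath) (ha : a ∈ q.support) :
    ∃ (z' : α) (p : (⊤ : SimpleGraph α).Walk z' u), p.IsPath ∧
      (∀ x, x ∈ p.support ↔ x ∈ q.support ∨ x ∈ w.support) ∧
      c s(v, z') + (p.edges.map c).sum ≤
        c s(a, z) + (q.edges.map c).sum + (w.edges.map c).sum := by
  induction w generalizing z q with
  | nil => exact ⟨z, q, hq, by grind [support_nil], by simp⟩
  | @cons a b v _ w ih =>
    have hba : c s(b, a) = c s(a, b) := by rw [Sym2.eq_swap]
    have htri := hc.2.2 b a z
    by_cases hb : b ∈ q.support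
    · obtain ⟨z', p, hp, hsupp, hcost⟩ := ih q hq hb
      refine ⟨z', p, hp, by grind [support_cons], ?_⟩
      simp only [edges_cons, List.map_cons, List.sum_cons]
      linarith
    · have hbz : (⊤ : SimpleGraph α).Adj b z :=
        (top_adj b z).mpr fun hbz => hb (hbz ▸ q.start_mem_support)
      obtain ⟨z', p, hp, hsupp, hcost⟩ :=
        ih (q.cons hbz) (hq.cons hb) (q.cons hbz).start_mem_support
      refine ⟨z', p, hp, by grind [support_cons, start_mem_support], ?_⟩
      simp only [edges_cons, List.map_cons, List.sum_cons, hc.2.1] at hcost ⊢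
      linarith

end Eulerian

theorem exists_ham_le_eulerian_general {V : Type} [Fintype V] [DecidableEq V]
    (c : Sym2 V → ℝ) (hc : IsMetricCost c) (hn : 3 ≤ Fintype.card V)
    (F : Multiset (Sym2 V)) (hFdiag : ∀ e ∈ F, ¬ e.IsDiag)
    (hconn : (SimpleGraph.fromEdgeSet {e : Sym2 V | e ∈ F}).Connected)
    (heven : ∀ v : V, Even (multiDeg F v)) :
    ∃ (v : V) (w : (⊤ : SimpleGraph V).Walk v v), w.IsHamiltonianCycle ∧
      (w.edges.map c).sum ≤ (F.map c).sum := by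
  have : Nonempty V := Fintype.card_pos_iff.mp (by omega)
  obtain ⟨a, w, hwF, hw⟩ := exists_eulerian_circuit hFdiag
    (fun v => by simpa [multiDeg, Multiset.countP_eq_card_filter] using heven v) hconn
  obtain ⟨z, p, hp, hpw, hcost⟩ :=
    exists_isPath_shortcut hc w .nil .nil (SimpleGraph.Walk.start_mem_support _)
  obtain ⟨h, hham⟩ :=
    (hp.isHamiltonian_of_mem fun x => (hpw x).2 (.inr (hw x))).exists_isHamiltonianCycle_cons hn
  refine ⟨a, p.cons h, hham, ?_⟩
  rw [SimpleGraph.Walk.edges_cons, List.map_cons, List.sum_cons]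
  calc c s(a, z) + (p.edges.map c).sum ≤ (w.edges.map c).sum := by simpa [hc.2.1] using hcost
    _ = (F.map c).sum := by rw [← hwF]; rfl

/-- Shortcutting an Eulerian multigraph: if the multiset of edges `F` forms a
connected multigraph touching every vertex in which every vertex has even degree,
then there is a Hamiltonian cycle of cost at most the total cost of `F`
(with multiplicity). -/
theorem exists_ham_le_eulerian {V : Type} [Fintype V] [DecidableEq V]
    (c : Sym2 V → ℝ) (hc : IsMetricCost c) (hn : 3 ≤ Fintype.card V)
    (F : Multiset (Sym2 V)) (hFdiag : ∀ e ∈ F, ¬ e.IsDiag)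
    (hconn : (SimpleGraph.fromEdgeSet {e : Sym2 V | e ∈ F}).Connected)
    (htouch : ∀ v : V, ∃ e ∈ F, v ∈ e)
    (heven : ∀ v : V, Even (multiDeg F v)) :
    ∃ (v : V) (w : (⊤ : SimpleGraph V).Walk v v), w.IsHamiltonianCycle ∧
      (w.edges.map c).sum ≤ (F.map c).sum :=
  exists_ham_le_eulerian_general c hc hn F hFdiag hconn heven
end
end

section
/- Let V be a finite set with |V| ≥ 3 and let c be a metric cost on the complete graph over V. Let M be a spanning tree of the complete graph over V, let T be the set of vertices having odd degree in M, and let J be a T-join of the complete graph over V. Then there exists a Hamiltonian cycle on V whose cost is at most the cost of M plus the cost of J. -/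
/-
As a multiset, `M + J` has only even degrees (a vertex is odd in `M` exactly when it
is odd in `J`) and is connected (it contains the spanning tree `M`), so it carries an Euler tour,
obtained by splicing closed subwalks into a longest closed walk. Listing the vertices in the order
of their last visit along the tour gives a Hamiltonian cycle whose vertex sequence is a
subsequence of the tour, so by the triangle inequality it costs at most the tour, i.e. at most
`c(M) + c(J)`.
-/


open scoped Classical

noncomputable section

variable {V : Type*} [Fintype V] [DecidableEq V]

theorem Multiset.countP_mem_cons_mk {V : Type*} [DecidableEq V] (x y v : V)
    (F : Multiset (Sym2 V)) :
    (s(x, y) ::ₘ F).countP (v ∈ ·) =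
      F.countP (v ∈ ·) + if v = x ∨ v = y then 1 else 0 := by
  simp [Multiset.countP_cons, Sym2.mem_iff]

theorem List.getLast?_dedup {α : Type*} [DecidableEq α] :
    ∀ l : List α, l.dedup.getLast? = l.getLast?
  | [] => rfl
  | [a] => by simp
  | a :: b :: l => by
    have ih := List.getLast?_dedup (b :: l)
    by_cases ha : a ∈ b :: l
    · rw [List.dedup_cons_of_mem ha, ih, List.getLast?_cons_cons]
    · rw [List.dedup_cons_of_notMem ha, List.getLast?_cons, ih, List.getLast?_cons_cons]
      simp [List.getLast?_cons]

namespace SimpleGraph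

section Euler

variable {V : Type*} [DecidableEq V] {G : SimpleGraph V}

theorem Walk.even_countP_edges_iff_s7 {u v : V} (p : G.Walk u v) (x : V) :
    Even (p.edges.countP (x ∈ ·)) ↔ (u ≠ v → x ≠ u ∧ x ≠ v) := by
  induction p with
  | nil => simp
  | cons h p ih =>
    have := h.ne
    simp only [Walk.edges_cons, List.countP_cons, Sym2.mem_iff] at *
    grind

theorem exists_walk_to_odd_vertex {F : Multiset (Sym2 V)} (hF : ∀ e ∈ F, e ∈ G.edgeSet)
    {y : V} (hy : Odd (F.countP (y ∈ ·))) :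
    ∃ z ≠ y, Odd (F.countP (z ∈ ·)) ∧ ∃ p : G.Walk y z, ↑p.edges ≤ F := by
  induction F using Multiset.strongInductionOn generalizing y with
  | ih F ih =>
    obtain ⟨e, heF, hye⟩ := Multiset.countP_pos.1 hy.pos
    obtain ⟨w, rfl⟩ := Sym2.mem_iff_exists.1 hye
    have hyw : G.Adj y w := hF _ heF
    obtain ⟨F, rfl⟩ : ∃ F', F = s(y, w) ::ₘ F' := ⟨_, (Multiset.cons_erase heF).symm⟩
    by_cases hw : Odd ((s(y, w) ::ₘ F).countP (w ∈ ·))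
    · exact ⟨w, hyw.ne.symm, hw, hyw.toWalk, by simp [heF]⟩
    have hw' : Odd (F.countP (w ∈ ·)) := by
      simpa [Multiset.countP_mem_cons_mk, Nat.odd_add_one] using hw
    obtain ⟨z, hzw, hz, p, hp⟩ :=
      ih F (Multiset.lt_cons_self _ _) (fun e he => hF e (Multiset.mem_cons_of_mem he)) hw'
    have hzy : z ≠ y := by
      rintro rfl
      simp [Nat.odd_add_one, hz] at hy
    refine ⟨z, hzy, by simpa [Multiset.countP_mem_cons_mk, hzy, hzw] using hz, .cons hyw p, ?_⟩
    simpa using Multiset.cons_le_cons _ hp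

theorem exists_closed_walk_of_even {F : Multiset (Sym2 V)} (hF : ∀ e ∈ F, e ∈ G.edgeSet)
    (heven : ∀ v, Even (F.countP (v ∈ ·))) {x w : V} (he : s(x, w) ∈ F) :
    ∃ p : G.Walk x x, 0 < p.length ∧ ↑p.edges ≤ F := by
  have hxw : G.Adj x w := hF _ he
  obtain ⟨F, rfl⟩ : ∃ F', F = s(x, w) ::ₘ F' := ⟨_, (Multiset.cons_erase he).symm⟩
  have hw : Odd (F.countP (w ∈ ·)) := by
    simpa [Multiset.countP_mem_cons_mk, Nat.even_add_one] using heven w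
  obtain ⟨z, hzw, hz, p, hp⟩ :=
    exists_walk_to_odd_vertex (fun e he => hF e (Multiset.mem_cons_of_mem he)) hw
  -- the only odd-degree vertices of `F` are `x` and `w`
  obtain rfl : z = x := by
    by_contra hzx
    refine Nat.not_even_iff_odd.2 hz ?_
    simpa [Multiset.countP_mem_cons_mk, hzx, hzw] using heven z
  exact ⟨.cons hxw p, by simp, by simpa using Multiset.cons_le_cons _ hp⟩

theorem Walk.exists_mem_support_mk_mem_sub_of_lt {E : Multiset (Sym2 V)} {v : V}
    (W : G.Walk v v) (hW : ↑W.edges < E)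
    (hconn : ∀ e ∈ E, ∀ x ∈ e, (fromEdgeSet {e | e ∈ E}).Reachable v x) :
    ∃ x ∈ W.support, ∃ y, s(x, y) ∈ E - ↑W.edges := by
  obtain ⟨e, he⟩ := Multiset.exists_mem_of_ne_zero (tsub_pos_of_lt hW).ne'
  induction e using Sym2.ind with
  | h a b =>
    by_cases ha : a ∈ W.support
    · exact ⟨a, ha, b, he⟩
    obtain ⟨p⟩ := hconn _ (Multiset.mem_of_le tsub_le_self he) a (Sym2.mem_mk_left a b)
    obtain ⟨d, -, hd, hd'⟩ :=
      p.exists_boundary_dart {x | x ∈ W.support} W.start_mem_support ha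
    have hdE : s(d.fst, d.snd) ∈ E := by
      simpa using (fromEdgeSet_adj _).1 d.adj |>.1
    refine ⟨d.fst, hd, d.snd, ?_⟩
    rw [Multiset.mem_sub, Multiset.count_eq_zero.2 (mt W.snd_mem_support_of_mem_edges hd')]
    exact Multiset.count_pos.2 hdE

theorem Walk.exists_longer_of_edges_lt {E : Multiset (Sym2 V)} (hE : ∀ e ∈ E, e ∈ G.edgeSet)
    (heven : ∀ x, Even (E.countP (x ∈ ·))) {v : V}
    (hconn : ∀ e ∈ E, ∀ x ∈ e, (fromEdgeSet {e | e ∈ E}).Reachable v x)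
    (W : G.Walk v v) (hW : ↑W.edges < E) :
    ∃ W' : G.Walk v v, ↑W'.edges ≤ E ∧ W.length < W'.length := by
  set F := E - ↑W.edges with hF
  have hWF : ↑W.edges + F = E := add_tsub_cancel_of_le hW.le
  have hFE : ∀ e ∈ F, e ∈ G.edgeSet := fun e he => hE e (Multiset.mem_of_le tsub_le_self he)
  have hFeven (x : V) : Even (F.countP (x ∈ ·)) := by
    rw [hF, Multiset.countP_sub hW.le]
    exact (heven x).tsub (by simpa using W.even_countP_edges_iff_s7 x)
  obtain ⟨x, hx, y, hxy⟩ := W.exists_mem_support_mk_mem_sub_of_lt hW hconn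
  obtain ⟨t, ht, htF⟩ := exists_closed_walk_of_even hFE hFeven hxy
  have hsplit := W.take_spec hx
  refine ⟨(W.takeUntil x hx).append (t.append (W.dropUntil x hx)), ?_, ?_⟩
  · have hedges := congrArg (fun p : G.Walk v v => (p.edges : Multiset (Sym2 V))) hsplit
    simp only [Walk.edges_append, ← Multiset.coe_add] at hedges ⊢
    rw [← hWF, ← hedges]
    calc _ = ((W.takeUntil x hx).edges + (W.dropUntil x hx).edges + t.edges :
          Multiset (Sym2 V)) := by abel
      _ ≤ _ := by gcongr
  · have hlen := congrArg Walk.length hsplit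
    simp only [Walk.length_append] at hlen ⊢
    omega

theorem exists_closed_walk_edges_eq {E : Multiset (Sym2 V)} (hE : ∀ e ∈ E, e ∈ G.edgeSet)
    (heven : ∀ x, Even (E.countP (x ∈ ·))) {v : V}
    (hconn : ∀ e ∈ E, ∀ x ∈ e, (fromEdgeSet {e | e ∈ E}).Reachable v x) :
    ∃ W : G.Walk v v, ↑W.edges = E := by
  by_contra! hno
  -- otherwise closed walks inside `E` could be made arbitrarily long
  have hlong (n : ℕ) : ∃ W : G.Walk v v, ↑W.edges ≤ E ∧ n ≤ W.length := by
    induction n with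
    | zero => exact ⟨.nil, by simp, le_rfl⟩
    | succ n ih =>
      obtain ⟨W, hW, hn⟩ := ih
      obtain ⟨W', hW', hlt⟩ := W.exists_longer_of_edges_lt hE heven hconn (hW.lt_of_ne (hno W))
      exact ⟨W', hW', by omega⟩
  obtain ⟨W, hW, hlen⟩ := hlong (Multiset.card E + 1)
  have := Multiset.card_le_card hW
  simp only [Multiset.coe_card, Walk.length_edges] at this
  omega

theorem Walk.mem_support_of_reachable {u v x : V} (W : G.Walk u v)
    (h : (fromEdgeSet {e | e ∈ W.edges}).Reachable u x) : x ∈ W.support := by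
  by_contra hx
  obtain ⟨p⟩ := h
  obtain ⟨d, -, hd, hd'⟩ := p.exists_boundary_dart {x | x ∈ W.support} W.start_mem_support hx
  have hdW : s(d.fst, d.snd) ∈ W.edges := by
    simpa using (fromEdgeSet_adj _).1 d.adj |>.1
  exact hd' (W.snd_mem_support_of_mem_edges hdW)

end Euler

section Shortcut

variable {V : Type*} {G : SimpleGraph V} {c : Sym2 V → ℝ}

theorem Walk.add_sum_map_edges_le_of_sublist_support (hc : IsMetricCost c) {x y v : V} (a : V)
    (q : G.Walk x v) (p : G.Walk y v) (h : q.support.Sublist p.support) :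
    c s(a, x) + (q.edges.map c).sum ≤ c s(a, y) + (p.edges.map c).sum := by
  induction p generalizing a x with
  | nil =>
    cases q with
    | nil => rfl
    | cons _ q => simpa using h.length_le
  | @cons u w v hyw p ih =>
    have hp : 0 ≤ (p.edges.map c).sum :=
      List.sum_nonneg fun e he => by obtain ⟨e, -, rfl⟩ := List.mem_map.1 he; exact hc.1 e
    have htri := hc.2.2 a u w
    have hedge := hc.1 s(u, w)
    rw [Walk.support_cons, List.sublist_cons_iff] at h
    rcases h with h | ⟨r, hq, hr⟩
    · have := ih a q h
      simp only [Walk.edges_cons, List.map_cons, List.sum_cons]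
      linarith
    · cases q with
      | nil =>
        obtain ⟨rfl, -⟩ := List.cons_eq_cons.1 hq
        simp only [Walk.edges_cons, Walk.edges_nil, List.map_cons, List.map_nil, List.sum_cons,
          List.sum_nil]
        linarith
      | cons hxz q =>
        obtain ⟨rfl, rfl⟩ := List.cons_eq_cons.1 hq
        have := ih x q hr
        simp only [Walk.edges_cons, List.map_cons, List.sum_cons]
        linarith

theorem Walk.sum_map_edges_le_of_sublist_support (hc : IsMetricCost c) {u v : V}
    {q p : G.Walk u v} (h : q.support.Sublist p.support) :
    (q.edges.map c).sum ≤ (p.edges.map c).sum := by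
  simpa using add_sum_map_edges_le_of_sublist_support hc u q p h

end Shortcut

section Hamiltonian

variable {V : Type*} [DecidableEq V] [Fintype V]

theorem exists_isHamiltonianCycle_support_eq_cons (hV : 3 ≤ Fintype.card V) {v : V}
    {d : List V} (hnd : d.Nodup) (hd : ∀ x, x ∈ d) (hlast : d.getLast? = some v) :
    ∃ C : (⊤ : SimpleGraph V).Walk v v, C.IsHamiltonianCycle ∧ C.support = v :: d := by
  have hdlen : d.length = Fintype.card V := by
    rw [← List.toFinset_card_of_nodup hnd, ← Finset.card_univ]
    exact congrArg _ (Finset.eq_univ_of_forall fun x => List.mem_toFinset.2 (hd x))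
  have hchain : (v :: d).IsChain (⊤ : SimpleGraph V).Adj := by
    obtain ⟨u, d, rfl⟩ := List.exists_cons_of_ne_nil (List.ne_nil_of_mem (hd v))
    have hvd : v ∈ d := by
      cases d with
      | nil => simp at hdlen; omega
      | cons => exact List.mem_of_getLast? (by simpa [List.getLast?_cons_cons] using hlast)
    rw [List.isChain_cons_cons, top_adj]
    exact ⟨fun h => (List.nodup_cons.1 hnd).1 (h ▸ hvd),
      (hnd.imp fun h => (top_adj _ _).2 h).isChain⟩
  have hlast' : (v :: d).getLast (List.cons_ne_nil _ _) = v := by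
    have := List.getLast?_eq_some_getLast (List.cons_ne_nil v d)
    rw [List.getLast?_cons, hlast] at this
    simpa using this.symm
  obtain ⟨C, hC⟩ : ∃ C : (⊤ : SimpleGraph V).Walk v v, C.support = v :: d :=
    ⟨(Walk.ofSupport (v :: d) (List.cons_ne_nil _ _) hchain).copy List.head_cons hlast',
      by rw [Walk.support_copy]; exact Walk.support_ofSupport _ _⟩
  have hClen : C.length = Fintype.card V := by
    have := C.length_support
    simp only [hC, List.length_cons, hdlen] at this
    omega
  have hCnil : ¬ C.Nil := fun h => by rw [← Walk.length_eq_zero_iff] at h; omega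
  refine ⟨C, ?_, hC⟩
  rw [Walk.isHamiltonianCycle_iff_isCycle_and_support_count_tail_eq_one,
    Walk.isCycle_iff_isPath_tail_and_le_length, Walk.isPath_def,
    C.support_tail_of_not_nil hCnil, hC, hClen]
  exact ⟨⟨hnd, hV⟩, fun x => List.count_eq_one_of_mem hnd (hd x)⟩

theorem Walk.exists_isHamiltonianCycle_sublist_support (hV : 3 ≤ Fintype.card V) {v : V}
    (W : (⊤ : SimpleGraph V).Walk v v) (hW : ∀ x, x ∈ W.support) :
    ∃ C : (⊤ : SimpleGraph V).Walk v v,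
      C.IsHamiltonianCycle ∧ C.support.Sublist W.support := by
  have hnil : ¬ W.Nil := fun h => by
    have hv (x : V) : x = v := by simpa [h.eq_nil] using hW x
    have := Fintype.card_le_one_iff.2 fun a b => (hv a).trans (hv b).symm
    omega
  have hsupp : W.support = v :: W.tail.support := by
    rw [W.support_tail_of_not_nil hnil, W.cons_tail_support]
  -- `dedup` keeps the last occurrence of each vertex, so the shortened tour still ends at `v`
  obtain ⟨C, hC, hCsupp⟩ := exists_isHamiltonianCycle_support_eq_cons hV
    (List.nodup_dedup W.tail.support)
    (fun x => List.mem_dedup.2 <| by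
      rcases W.mem_support_iff.1 (hW x) with rfl | h
      · exact W.tail.end_mem_support
      · exact W.support_tail_of_not_nil hnil ▸ h)
    (by rw [List.getLast?_dedup, List.getLast?_eq_some_getLast W.tail.support_ne_nil,
      Walk.getLast_support])
  refine ⟨C, hC, ?_⟩
  rw [hCsupp, hsupp]
  exact (List.dedup_sublist _).cons_cons v

end Hamiltonian

end SimpleGraph

theorem even_countP_mem_add_of_odd_degIn_iff {V : Type*} [DecidableEq V] {M J : Finset (Sym2 V)}
    (h : ∀ x, Odd (degIn M x) ↔ Odd (degIn J x)) (x : V) :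
    Even ((M.val + J.val).countP (x ∈ ·)) := by
  have hdeg (F : Finset (Sym2 V)) : degIn F x = F.val.countP (x ∈ ·) :=
    (Multiset.countP_eq_card_filter _ _).symm
  rw [Multiset.countP_add, Nat.even_add, ← Nat.not_odd_iff_even, ← Nat.not_odd_iff_even,
    ← hdeg, ← hdeg]
  exact not_congr (h x)

open SimpleGraph in
/-- Given a spanning tree `M` of the metric complete graph and a `T`-join `J` for
`T` the odd-degree vertices of `M`, there is a Hamiltonian cycle of cost at most
the cost of `M` plus the cost of `J`. -/
theorem exists_ham_le_tree_add_tjoin {V : Type} [Fintype V] [DecidableEq V]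
    (c : Sym2 V → ℝ) (hc : IsMetricCost c) (hn : 3 ≤ Fintype.card V)
    (M : Finset (Sym2 V)) (hM : IsSpanningTree (⊤ : SimpleGraph V) M)
    (T : Set V) (hT : T = {v | Odd (degIn M v)})
    (J : Finset (Sym2 V)) (hJ : IsTJoin (⊤ : SimpleGraph V) T J) :
    ∃ (v : V) (w : (⊤ : SimpleGraph V).Walk v v), w.IsHamiltonianCycle ∧
      (w.edges.map c).sum ≤ ∑ e ∈ M, c e + ∑ e ∈ J, c e := by
  obtain ⟨hMtop, hMtree⟩ := hM
  obtain ⟨hJtop, hJodd⟩ := hJ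
  have hEtop : ∀ e ∈ M.val + J.val, e ∈ (⊤ : SimpleGraph V).edgeSet := fun e he =>
    (Multiset.mem_add.1 he).elim (@hMtop e) (@hJtop e)
  have heven := even_countP_mem_add_of_odd_degIn_iff (M := M) (J := J) fun x => by
    rw [← hJodd, hT]; rfl
  have hreach (u x : V) : (fromEdgeSet {e | e ∈ M.val + J.val}).Reachable u x :=
    (hMtree.connected.preconnected u x).mono
      (fromEdgeSet_mono fun e he => Multiset.mem_add.2 (Or.inl he))
  obtain ⟨v⟩ := hMtree.connected.nonempty
  obtain ⟨W, hW⟩ := exists_closed_walk_edges_eq hEtop heven fun _ _ x _ => hreach v x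
  obtain ⟨C, hC, hsub⟩ :=
    W.exists_isHamiltonianCycle_sublist_support hn fun x => W.mem_support_of_reachable (by
      simpa [← Multiset.mem_coe, hW] using hreach v x)
  refine ⟨v, C, hC, ?_⟩
  calc (C.edges.map c).sum ≤ (W.edges.map c).sum :=
        Walk.sum_map_edges_le_of_sublist_support hc hsub
    _ = ∑ e ∈ M, c e + ∑ e ∈ J, c e := by
      rw [← Multiset.sum_coe, ← Multiset.map_coe, hW, Multiset.map_add, Multiset.sum_add]
      rfl
end
end

section
/- Let G = (V,E) be a finite connected undirected graph with nonnegative edge costs c : E → ℝ≥0, and let T ⊆ V be a nonempty set of even cardinality. Then the minimum cost of a T-join of G equals the minimum cost of a perfect matching in the complete graph on vertex set T, where the cost of an edge {s,t} of that complete graph is the shortest-path distance from s to t in G (the minimum total cost of a walk in G from s to t). -/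
open scoped Classical

noncomputable section

variable {V : Type*} [Fintype V] [DecidableEq V]

/-- The shortest-path distance between the two endpoints of the pair `e`:
the infimum of the total cost of a walk in `G` between them. -/
def spDist (G : SimpleGraph V) (c : Sym2 V → ℝ) (e : Sym2 V) : ℝ :=
  sInf {t | ∃ u v, e = s(u, v) ∧ ∃ p : G.Walk u v, t = (p.edges.map c).sum}

/-- `P` is a perfect matching of the complete graph on the vertex set `T`:
a set of unordered pairs of distinct vertices of `T` such that every vertex of
`T` lies in exactly one pair. -/
def IsPerfectMatchingOn (T : Finset V) (P : Finset (Sym2 V)) : Prop :=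
  (∀ e ∈ P, ¬e.IsDiag ∧ ∀ v ∈ e, v ∈ T) ∧
    ∀ v ∈ T, (P.filter fun e => v ∈ e).card = 1


/-!
Given a `T`-join `J` and `s ∈ T`, the vertices of odd `J`-degree in the `J`-component of `s` are
even in number, so a trail in `J` leads from `s` to some other `t ∈ T`. Its cost is at least the
distance of `s` and `t`, and removing its edges leaves a `(T \ {s, t})`-join; by induction on `T`,
every `T`-join costs at least some perfect matching of `T`. Conversely, the symmetric difference of
shortest paths between matched pairs is a `T`-join costing at most the matching (costs are
nonnegative). Each infimum is therefore bounded by the other.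
-/

open Finset SimpleGraph
open scoped symmDiff

theorem Finset.card_symmDiff_add_two_mul_card_inter {α : Type*} [DecidableEq α]
    (s t : Finset α) : #(s ∆ t) + 2 * #(s ∩ t) = #s + #t := by
  have hunion := card_union_add_card_inter s t
  have hle : #(s ∩ t) ≤ #(s ∪ t) := card_le_card inter_subset_union
  rw [symmDiff_eq_sup_sdiff_inf, sup_eq_union, inf_eq_inter,
    card_sdiff_of_subset inter_subset_union]
  omega

theorem Finset.sum_symmDiff_le_sum_add_sum {α M : Type*} [DecidableEq α] [AddCommMonoid M]
    [PartialOrder M] [IsOrderedAddMonoid M] {s t : Finset α} {f : α → M}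
    (hf : ∀ x ∈ s ∪ t, 0 ≤ f x) : ∑ x ∈ s ∆ t, f x ≤ ∑ x ∈ s, f x + ∑ x ∈ t, f x := by
  rw [← sum_union_inter]
  exact (sum_le_sum_of_subset_of_nonneg symmDiff_subset_union fun x hx _ => hf x hx).trans
    (le_add_of_nonneg_right (sum_nonneg fun x hx => hf x (inter_subset_union hx)))

section

variable {V : Type*}

theorem spDist_le_walk_cost {G : SimpleGraph V} {c : Sym2 V → ℝ}
    (hc : ∀ e ∈ G.edgeSet, 0 ≤ c e) {u v : V} (p : G.Walk u v) :
    spDist G c s(u, v) ≤ (p.edges.map c).sum := by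
  refine csInf_le ⟨0, ?_⟩ ⟨u, v, rfl, p, rfl⟩
  rintro _ ⟨-, -, -, q, rfl⟩
  exact List.sum_nonneg fun x hx => by
    obtain ⟨e, he, rfl⟩ := List.mem_map.mp hx
    exact hc e (q.edges_subset_edgeSet he)

variable [DecidableEq V]

theorem SimpleGraph.Walk.cost_bypass_le {G : SimpleGraph V} {c : Sym2 V → ℝ}
    (hc : ∀ e ∈ G.edgeSet, 0 ≤ c e) {u v : V} (p : G.Walk u v) :
    (p.bypass.edges.map c).sum ≤ (p.edges.map c).sum :=
  (p.edges_bypass_sublist_edges.map c).sum_le_sum fun x hx => by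
    obtain ⟨e, he, rfl⟩ := List.mem_map.mp hx
    exact hc e (p.edges_subset_edgeSet he)

theorem degIn_symmDiff_add (A B : Finset (Sym2 V)) (v : V) :
    degIn (A ∆ B) v + 2 * degIn (A ∩ B) v = degIn A v + degIn B v := by
  have hfilter : (A ∆ B).filter (v ∈ ·) = A.filter (v ∈ ·) ∆ B.filter (v ∈ ·) := by
    ext e
    simp only [mem_filter, mem_symmDiff]
    tauto
  rw [degIn, degIn, degIn, degIn, hfilter, filter_inter_distrib]
  exact card_symmDiff_add_two_mul_card_inter _ _

theorem IsPerfectMatchingOn.eq_of_mem {T : Finset V} {P : Finset (Sym2 V)}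
    (hP : IsPerfectMatchingOn T P) {w : V} (hw : w ∈ T) {e e' : Sym2 V}
    (he : e ∈ P) (he' : e' ∈ P) (hwe : w ∈ e) (hwe' : w ∈ e') : e = e' :=
  card_le_one.mp (hP.2 w hw).le e (mem_filter.mpr ⟨he, hwe⟩) e' (mem_filter.mpr ⟨he', hwe'⟩)

theorem isPerfectMatchingOn_empty_iff {T : Finset V} : IsPerfectMatchingOn T ∅ ↔ T = ∅ := by
  simp [IsPerfectMatchingOn, eq_empty_iff_forall_notMem]

theorem IsPerfectMatchingOn.insert_pair {T : Finset V} {P : Finset (Sym2 V)} {s t : V}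
    (hP : IsPerfectMatchingOn (T \ {s, t}) P) (hs : s ∈ T) (ht : t ∈ T) (hst : s ≠ t) :
    IsPerfectMatchingOn T (insert s(s, t) P) := by
  refine ⟨fun e he => ?_, fun w hw => ?_⟩
  · rcases mem_insert.mp he with rfl | he
    · refine ⟨Sym2.mk_isDiag_iff.not.mpr hst, fun w hw => ?_⟩
      rcases Sym2.mem_iff.mp hw with rfl | rfl <;> assumption
    · exact ⟨(hP.1 e he).1, fun w hw => (mem_sdiff.mp ((hP.1 e he).2 w hw)).1⟩
  by_cases hwe : w ∈ s(s, t)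
  · have hfilter : P.filter (w ∈ ·) = ∅ := filter_eq_empty_iff.mpr fun e he hwe' => by
      have := mem_sdiff.mp ((hP.1 e he).2 w hwe')
      simp_all
    rw [filter_insert, if_pos hwe, hfilter]
    rfl
  · rw [filter_insert, if_neg hwe]
    exact hP.2 w (by simp_all)

theorem IsPerfectMatchingOn.of_insert_pair {T : Finset V} {P : Finset (Sym2 V)} {u v : V}
    (hP : IsPerfectMatchingOn T (insert s(u, v) P)) (huvP : s(u, v) ∉ P) :
    IsPerfectMatchingOn (T \ {u, v}) P := by
  have hdisj : ∀ e ∈ P, ∀ w ∈ e, w ≠ u ∧ w ≠ v := by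
    rintro e he w hwe
    have hwT := (hP.1 e (mem_insert_of_mem he)).2 w hwe
    have hne : e ≠ s(u, v) := fun h => huvP (h ▸ he)
    constructor <;> rintro rfl <;>
      exact hne (hP.eq_of_mem hwT (mem_insert_of_mem he) (mem_insert_self _ _) hwe (by simp))
  refine ⟨fun e he => ⟨(hP.1 e (mem_insert_of_mem he)).1, fun w hw => ?_⟩, fun w hw => ?_⟩
  · simpa [hdisj e he w hw] using (hP.1 e (mem_insert_of_mem he)).2 w hw
  · have hw' : w ∈ T ∧ w ≠ u ∧ w ≠ v := by simpa using hw
    have := hP.2 w hw'.1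
    rwa [filter_insert, if_neg (by simp [hw'.2.1, hw'.2.2])] at this

variable [Fintype V]

theorem exists_isPath_cost_le_spDist {G : SimpleGraph V} {c : Sym2 V → ℝ}
    (hc : ∀ e ∈ G.edgeSet, 0 ≤ c e) {u v : V} (huv : G.Reachable u v) :
    ∃ p : G.Walk u v, p.IsPath ∧ (p.edges.map c).sum ≤ spDist G c s(u, v) := by
  have : Nonempty (G.Path u v) := ⟨huv.some.toPath⟩
  obtain ⟨p, hp⟩ := Finite.exists_min fun p : G.Path u v => (p.1.edges.map c).sum
  refine ⟨p, p.2, le_csInf ⟨_, u, v, rfl, p, rfl⟩ ?_⟩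
  rintro _ ⟨a, b, hab, q, rfl⟩
  rcases Sym2.eq_iff.mp hab with ⟨rfl, rfl⟩ | ⟨rfl, rfl⟩
  · exact (hp ⟨_, q.bypass_isPath⟩).trans (q.cost_bypass_le hc)
  · calc (p.1.edges.map c).sum
        ≤ (q.reverse.bypass.edges.map c).sum := hp ⟨_, q.reverse.bypass_isPath⟩
      _ ≤ (q.reverse.edges.map c).sum := q.reverse.cost_bypass_le hc
      _ = (q.edges.map c).sum := by simp [List.sum_reverse]

def oddVertices (J : Finset (Sym2 V)) : Finset V := {v | Odd (degIn J v)}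

theorem isTJoin_iff {G : SimpleGraph V} {T : Finset V} {J : Finset (Sym2 V)} :
    IsTJoin G T J ↔ (J : Set (Sym2 V)) ⊆ G.edgeSet ∧ oddVertices J = T := by
  simp [IsTJoin, oddVertices, Finset.ext_iff, iff_comm]

theorem oddVertices_symmDiff (A B : Finset (Sym2 V)) :
    oddVertices (A ∆ B) = oddVertices A ∆ oddVertices B := by
  ext v
  have h := congrArg Odd (degIn_symmDiff_add A B v)
  simp only [Nat.odd_add, even_two_mul, iff_true, ← Nat.not_odd_iff_even] at h
  simp only [oddVertices, mem_filter, mem_univ, true_and, mem_symmDiff]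
  tauto

theorem SimpleGraph.Walk.IsTrail.oddVertices_edges {G : SimpleGraph V} {u v : V}
    {p : G.Walk u v} (hp : p.IsTrail) (huv : u ≠ v) :
    oddVertices p.edges.toFinset = {u, v} := by
  ext x
  have hdeg : degIn p.edges.toFinset x = p.edges.countP (x ∈ ·) := by
    simp [degIn, ← List.toFinset_eq hp.edges_nodup, Finset.filter, List.countP_eq_length_filter]
  simp only [oddVertices, mem_filter, mem_univ, true_and, hdeg, ← Nat.not_even_iff_odd,
    hp.even_countP_edges_iff, mem_insert, mem_singleton]
  tauto

theorem even_card_oddVertices_inter {J : Finset (Sym2 V)} (hJ : ∀ e ∈ J, ¬e.IsDiag)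
    {R : Finset V} (hR : ∀ a b, s(a, b) ∈ J → a ∈ R → b ∈ R) :
    Even #(oddVertices J ∩ R) := by
  have hsum : Even (∑ v ∈ R, degIn J v) := by
    change Even (∑ v ∈ R, #(J.bipartiteAbove (· ∈ ·) v))
    rw [sum_card_bipartiteAbove_eq_sum_card_bipartiteBelow]
    refine even_sum _ fun e he => ?_
    induction e using Sym2.ind with
    | _ a b =>
    have hiff : a ∈ R ↔ b ∈ R := ⟨hR a b he, hR b a (Sym2.eq_swap ▸ he)⟩
    by_cases ha : a ∈ R
    · have hab : R.bipartiteBelow (· ∈ ·) s(a, b) = {a, b} := by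
        ext x
        simp only [bipartiteBelow, mem_filter, Sym2.mem_iff, mem_insert, mem_singleton]
        grind
      rw [hab, card_pair (by simpa using hJ _ he)]
      exact even_two
    · have hab : R.bipartiteBelow (· ∈ ·) s(a, b) = ∅ := by
        ext x
        simp only [bipartiteBelow, mem_filter, Sym2.mem_iff, notMem_empty]
        grind
      simp [hab]
  rw [even_sum_iff_even_card_odd] at hsum
  rwa [oddVertices, filter_inter, univ_inter]

theorem exists_trail_to_oddVertex {G : SimpleGraph V} {J : Finset (Sym2 V)}
    (hJG : (J : Set (Sym2 V)) ⊆ G.edgeSet) {s : V} (hs : s ∈ oddVertices J) :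
    ∃ t ∈ oddVertices J, t ≠ s ∧
      ∃ q : G.Walk s t, q.IsTrail ∧ q.edges.toFinset ⊆ J := by
  set H := fromEdgeSet (J : Set (Sym2 V))
  have hHG : H ≤ G := fun a b hab => hJG (fromEdgeSet_adj _ |>.mp hab).1
  set R : Finset V := {v | H.Reachable s v}
  have hR : ∀ a b, s(a, b) ∈ J → a ∈ R → b ∈ R := by
    intro a b hab ha
    have hadj : H.Adj a b := (fromEdgeSet_adj _).mpr ⟨hab, G.ne_of_adj (hJG hab)⟩
    simp only [R, mem_filter, mem_univ, true_and] at ha ⊢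
    exact ha.trans hadj.reachable
  have heven :=
    even_card_oddVertices_inter (fun e he => G.not_isDiag_of_mem_edgeSet (hJG he)) hR
  have hsR : s ∈ oddVertices J ∩ R := mem_inter.mpr ⟨hs, by simp [R]⟩
  have hcard : 1 < #(oddVertices J ∩ R) := by
    obtain ⟨k, hk⟩ := heven
    have := card_pos.mpr ⟨s, hsR⟩
    omega
  obtain ⟨t, ht, hts⟩ := exists_mem_ne hcard s
  obtain ⟨ht, htR⟩ := mem_inter.mp ht
  obtain ⟨p⟩ : H.Reachable s t := (mem_filter.mp htR).2
  refine ⟨t, ht, hts, p.bypass.mapLe hHG,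
    (Walk.isTrail_mapLe hHG).mpr p.bypass_isPath.isTrail, fun e he => ?_⟩
  rw [Walk.edges_mapLe_eq_edges, List.mem_toFinset] at he
  have heH := p.bypass.edges_subset_edgeSet he
  rw [edgeSet_fromEdgeSet] at heH
  exact mem_coe.mp heH.1

theorem exists_perfectMatching_cost_le_of_isTJoin {G : SimpleGraph V} {c : Sym2 V → ℝ}
    (hc : ∀ e ∈ G.edgeSet, 0 ≤ c e) (T : Finset V) {J : Finset (Sym2 V)}
    (hJ : IsTJoin G T J) :
    ∃ P, IsPerfectMatchingOn T P ∧ ∑ e ∈ P, spDist G c e ≤ ∑ e ∈ J, c e := by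
  induction T using Finset.strongInduction generalizing J with
  | H T ih =>
  obtain ⟨hJG, hJT⟩ := isTJoin_iff.mp hJ
  rcases T.eq_empty_or_nonempty with rfl | ⟨s, hs⟩
  · exact ⟨∅, isPerfectMatchingOn_empty_iff.mpr rfl,
      by simpa using sum_nonneg fun e he => hc e (hJG he)⟩
  obtain ⟨t, ht, hts, q, hq, hqJ⟩ := exists_trail_to_oddVertex hJG (hJT ▸ hs)
  rw [hJT] at ht
  have hst : {s, t} ⊆ T := insert_subset hs (singleton_subset_iff.mpr ht)
  have hJ' : IsTJoin G ↑(T \ {s, t}) (J \ q.edges.toFinset) := by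
    refine isTJoin_iff.mpr ⟨fun e he => hJG (mem_sdiff.mp he).1, ?_⟩
    rw [← symmDiff_of_ge hqJ, oddVertices_symmDiff, hq.oddVertices_edges hts.symm, hJT,
      symmDiff_of_ge hst]
  obtain ⟨P, hP, hcost⟩ := ih _ (sdiff_ssubset hst (insert_nonempty _ _)) hJ'
  have hstP : s(s, t) ∉ P := fun h => by simpa using (hP.1 _ h).2 s (Sym2.mem_mk_left s t)
  refine ⟨insert s(s, t) P, hP.insert_pair hs ht hts.symm, ?_⟩
  calc ∑ e ∈ insert s(s, t) P, spDist G c e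
      = spDist G c s(s, t) + ∑ e ∈ P, spDist G c e := sum_insert hstP
    _ ≤ ∑ e ∈ q.edges.toFinset, c e + ∑ e ∈ J \ q.edges.toFinset, c e := by
      rw [List.sum_toFinset c hq.edges_nodup]
      exact add_le_add (spDist_le_walk_cost hc q) hcost
    _ = ∑ e ∈ J, c e := by rw [add_comm, sum_sdiff hqJ]

theorem exists_isTJoin_cost_le_of_perfectMatching {G : SimpleGraph V} (hG : G.Connected)
    {c : Sym2 V → ℝ} (hc : ∀ e ∈ G.edgeSet, 0 ≤ c e) (T : Finset V) {P : Finset (Sym2 V)}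
    (hP : IsPerfectMatchingOn T P) :
    ∃ J, IsTJoin G T J ∧ ∑ e ∈ J, c e ≤ ∑ e ∈ P, spDist G c e := by
  induction P using Finset.induction_on generalizing T with
  | empty =>
    obtain rfl := isPerfectMatchingOn_empty_iff.mp hP
    exact ⟨∅, isTJoin_iff.mpr ⟨by simp, by simp [oddVertices, degIn]⟩, by simp⟩
  | insert e P heP ih =>
  induction e using Sym2.ind with
  | _ u v =>
  have huv : u ≠ v := Sym2.mk_isDiag_iff.not.mp (hP.1 _ (mem_insert_self _ _)).1
  have huvT : {u, v} ⊆ T := fun w hw => (hP.1 _ (mem_insert_self _ _)).2 w (by simpa using hw)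
  obtain ⟨J, hJ, hcost⟩ := ih _ (hP.of_insert_pair heP)
  obtain ⟨hJG, hJT⟩ := isTJoin_iff.mp hJ
  obtain ⟨p, hp, hpcost⟩ := exists_isPath_cost_le_spDist hc (hG.preconnected u v)
  have hpG : (p.edges.toFinset : Set (Sym2 V)) ⊆ G.edgeSet := fun e he =>
    p.edges_subset_edgeSet (List.mem_toFinset.mp he)
  have hsubG : ∀ e ∈ J ∪ p.edges.toFinset, e ∈ G.edgeSet := fun e he =>
    Set.union_subset hJG hpG (by simpa using he)
  refine ⟨J ∆ p.edges.toFinset, isTJoin_iff.mpr ⟨?_, ?_⟩, ?_⟩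
  · intro e he
    exact hsubG e (symmDiff_subset_union he)
  · rw [oddVertices_symmDiff, hJT, hp.isTrail.oddVertices_edges huv,
      symmDiff_eq_union disjoint_sdiff_self_left, sdiff_union_of_subset huvT]
  calc ∑ e ∈ J ∆ p.edges.toFinset, c e
      ≤ ∑ e ∈ J, c e + ∑ e ∈ p.edges.toFinset, c e :=
        sum_symmDiff_le_sum_add_sum fun e he => hc e (hsubG e he)
    _ ≤ ∑ e ∈ P, spDist G c e + spDist G c s(u, v) := by
      rw [List.sum_toFinset c hp.edges_nodup]
      exact add_le_add hcost hpcost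
    _ = ∑ e ∈ insert s(u, v) P, spDist G c e := by rw [sum_insert heP, add_comm]

end

theorem min_tjoin_eq_min_matching_general {V : Type} [Fintype V] [DecidableEq V]
    (G : SimpleGraph V) (hG : G.Connected)
    (c : Sym2 V → ℝ) (hc : ∀ e ∈ G.edgeSet, 0 ≤ c e)
    (T : Finset V) :
    sInf {t | ∃ J : Finset (Sym2 V), IsTJoin G (T : Set V) J ∧ t = ∑ e ∈ J, c e} =
      sInf {t | ∃ P : Finset (Sym2 V), IsPerfectMatchingOn T P ∧
        t = ∑ e ∈ P, spDist G c e} := by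
  apply csInf_eq_csInf_of_forall_exists_le
  · rintro _ ⟨J, hJ, rfl⟩
    obtain ⟨P, hP, hcost⟩ := exists_perfectMatching_cost_le_of_isTJoin hc T hJ
    exact ⟨_, ⟨P, hP, rfl⟩, hcost⟩
  · rintro _ ⟨P, hP, rfl⟩
    obtain ⟨J, hJ, hcost⟩ := exists_isTJoin_cost_le_of_perfectMatching hG hc T hP
    exact ⟨_, ⟨J, hJ, rfl⟩, hcost⟩

/-- Edmonds: the minimum cost of a `T`-join of a connected graph `G` equals the
minimum cost of a perfect matching of the complete graph on `T` whose edge costs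
are the shortest-path distances in `G`. -/
theorem min_tjoin_eq_min_matching {V : Type} [Fintype V] [DecidableEq V]
    (G : SimpleGraph V) (hG : G.Connected)
    (c : Sym2 V → ℝ) (hc : ∀ e ∈ G.edgeSet, 0 ≤ c e)
    (T : Finset V) (hT : T.Nonempty) (hTeven : Even T.card) :
    sInf {t | ∃ J : Finset (Sym2 V), IsTJoin G (T : Set V) J ∧ t = ∑ e ∈ J, c e} =
      sInf {t | ∃ P : Finset (Sym2 V), IsPerfectMatchingOn T P ∧
        t = ∑ e ∈ P, spDist G c e} :=
  min_tjoin_eq_min_matching_general G hG c hc T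
end
end
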